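/- arXiv:1110.2541 — 4 statements merged into one kernel-verified Lean document; each statement's English description precedes it below -/
import Mathlib

section
/- For every integer n ≥ 1, every integer i with 3 ≤ i ≤ n+1, and every real number ε > 0, the set 𝓜ᵢ ∩ {x ∈ ℝ : x > ε} is finite. -/
open Finset

noncomputable section

/-- Cast an integer vector to a real vector. -/
def castVec {n : ℕ} (w : Fin n → ℤ) : Fin n → ℝ := fun j => (w j : ℝ)

/-- The coordinatewise cast `ℤⁿ →+ ℝⁿ`. -/
def castHom (n : ℕ) : (Fin n → ℤ) →+ (Fin n → ℝ) where
  toFun := castVec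
  map_zero' := by funext j; simp [castVec]
  map_add' x y := by funext j; simp [castVec]

/-- A toric Fano datum of dimension `n`: primitive vectors `v 0, …, v n ∈ ℤⁿ` whose
nonnegative real span is all of `ℝⁿ`, together with positive integers `a 0, …, a n`
with gcd one and `∑ i, a i • v i = 0`.  These data correspond to the `n`-dimensional
`ℚ`-factorial toric Fano varieties with Picard number one. -/
structure ToricFanoDatum (n : ℕ) where
  v : Fin (n + 1) → Fin n → ℤ
  a : Fin (n + 1) → ℕ
  a_pos : ∀ i, 0 < a i
  primitive : ∀ i, Finset.univ.gcd (fun j => (v i j).natAbs) = 1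
  span_cone : ∀ x : Fin n → ℝ, ∃ c : Fin (n + 1) → ℝ, (∀ i, 0 ≤ c i) ∧
      x = ∑ i, c i • castVec (v i)
  gcd_a : Finset.univ.gcd a = 1
  sum_av : ∑ i, (a i : ℤ) • v i = 0

namespace ToricFanoDatum

variable {n : ℕ}

/-- `mult(σₖ) = [ℤⁿ : ∑_{i ≠ k} ℤ vᵢ]`. -/
def multSigma (D : ToricFanoDatum n) (k : Fin (n + 1)) : ℕ :=
  (AddSubgroup.closure {w | ∃ i, i ≠ k ∧ w = D.v i}).index

/-- The lattice `ℤⁿ ∩ span_ℝ {vᵢ : i ≠ k, l}`. -/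
def latticeMu (D : ToricFanoDatum n) (k l : Fin (n + 1)) : AddSubgroup (Fin n → ℤ) :=
  AddSubgroup.comap (castHom n)
    (Submodule.span ℝ {w | ∃ i, i ≠ k ∧ i ≠ l ∧ w = castVec (D.v i)}).toAddSubgroup

/-- `mult(μ_{k,l}) = [ℤⁿ ∩ span_ℝ {vᵢ : i ≠ k, l} : ∑_{i ≠ k, l} ℤ vᵢ]`. -/
def multMu (D : ToricFanoDatum n) (k l : Fin (n + 1)) : ℕ :=
  (AddSubgroup.closure {w | ∃ i, i ≠ k ∧ i ≠ l ∧ w = D.v i}).relIndex (D.latticeMu k l)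

/-- The minimal length of the extremal ray:
`l(X) = (∑ i, aᵢ) · min_{k ≠ l} mult(μ_{k,l}) / (a_l · mult(σₖ))`. -/
def minLength (D : ToricFanoDatum n) : ℝ :=
  (∑ i, (D.a i : ℝ)) *
    sInf {x : ℝ | ∃ k l : Fin (n + 1), k ≠ l ∧
      x = (D.multMu k l : ℝ) / ((D.a l : ℝ) * (D.multSigma k : ℝ))}

/-- A datum is normalized if `mult(μ_{1,2})/(a₁ mult(σ₂)) ≤ mult(μ_{k,l})/(aₖ mult(σ_l))`
for all `k ≠ l` (here `1, 2` of the paper are the indices `0, 1`). -/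
def Normalized (D : ToricFanoDatum n) : Prop :=
  ∀ k l : Fin (n + 1), k ≠ l →
    (D.multMu 0 1 : ℝ) / ((D.a 0 : ℝ) * (D.multSigma 1 : ℝ)) ≤
      (D.multMu k l : ℝ) / ((D.a k : ℝ) * (D.multSigma l : ℝ))

end ToricFanoDatum

/-- `𝓛ₙ^toric`, the set of minimal lengths of extremal rays of `n`-dimensional
`ℚ`-factorial toric Fano varieties with Picard number one. -/
def LtoricSet (n : ℕ) : Set ℝ := {x | ∃ D : ToricFanoDatum n, x = D.minLength}

/-- `𝓜ᵢ`: the set of values `mult(μ_{1,2}) · aᵢ / (a₁ · mult(σ₂))` over all normalized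
toric Fano data of dimension `n`. -/
def Mset (n : ℕ) (i : Fin (n + 1)) : Set ℝ :=
  {x | ∃ D : ToricFanoDatum n, D.Normalized ∧
    x = ((D.multMu 0 1 : ℝ) * (D.a i : ℝ)) / ((D.a 0 : ℝ) * (D.multSigma 1 : ℝ))}

/-- A set of reals satisfies the ascending chain condition if every nondecreasing
sequence of its elements is eventually constant. -/
def SatisfiesACC (A : Set ℝ) : Prop :=
  ∀ f : ℕ → ℝ, (∀ k, f k ∈ A) → Monotone f → ∃ N, ∀ m, N ≤ m → f m = f N

/-- A set of reals satisfies the descending chain condition if every nonincreasing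
sequence of its elements is eventually constant. -/
def SatisfiesDCC (A : Set ℝ) : Prop :=
  ∀ f : ℕ → ℝ, (∀ k, f k ∈ A) → Antitone f → ∃ N, ∀ m, N ≤ m → f m = f N


namespace ToricAux

open ToricFanoDatum

variable {n : ℕ}

def castVecQ {n : ℕ} (w : Fin n → ℤ) : Fin n → ℚ := fun j => (w j : ℚ)

lemma castVecQ_injective : Function.Injective (castVecQ (n := n)) := by
  intro x y h; funext j
  have := congrFun h j
  simpa [castVecQ] using this

/-- ℚ-linear coordinatewise cast. -/
def castQR {n : ℕ} : (Fin n → ℚ) →ₗ[ℚ] (Fin n → ℝ) where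
  toFun x := fun j => (x j : ℝ)
  map_add' x y := by funext j; push_cast; simp
  map_smul' q x := by
    funext j
    simp only [Pi.smul_apply, Rat.smul_def, RingHom.id_apply]
    push_cast; ring

lemma castQR_cast (g : Fin n → ℤ) : castQR (castVecQ g) = castVec g := by
  funext j; simp [castQR, castVecQ, castVec]

lemma int_decomp (g : Fin n → ℤ) : g = ∑ j, g j • Pi.single j 1 := by
  funext t
  rw [Finset.sum_apply]
  simp [Pi.single_apply]

lemma map_int (φ : (Fin n → ℤ) →+ ℤ) (g : Fin n → ℤ) :
    φ g = ∑ j, g j * φ (Pi.single j 1) := by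
  conv_lhs => rw [int_decomp g]
  rw [map_sum]
  refine Finset.sum_congr rfl fun j _ => ?_
  rw [map_zsmul, smul_eq_mul]

/-- ℚ-linear extension of an integer functional. -/
def extQ (φ : (Fin n → ℤ) →+ ℤ) : (Fin n → ℚ) →ₗ[ℚ] ℚ :=
  ∑ j, (φ (Pi.single j 1) : ℚ) • (LinearMap.proj j : (Fin n → ℚ) →ₗ[ℚ] ℚ)

lemma extQ_apply (φ : (Fin n → ℤ) →+ ℤ) (x : Fin n → ℚ) :
    extQ φ x = ∑ j, x j * (φ (Pi.single j 1) : ℚ) := by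
  simp [extQ, mul_comm]

lemma extQ_cast (φ : (Fin n → ℤ) →+ ℤ) (g : Fin n → ℤ) :
    extQ φ (castVecQ g) = (φ g : ℚ) := by
  rw [extQ_apply, map_int φ g]
  push_cast
  rfl

/-- ℝ-linear extension of an integer functional. -/
def extR (φ : (Fin n → ℤ) →+ ℤ) : (Fin n → ℝ) →ₗ[ℝ] ℝ :=
  ∑ j, ((φ (Pi.single j 1) : ℤ) : ℝ) • (LinearMap.proj j : (Fin n → ℝ) →ₗ[ℝ] ℝ)

lemma extR_apply (φ : (Fin n → ℤ) →+ ℤ) (x : Fin n → ℝ) :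
    extR φ x = ∑ j, x j * ((φ (Pi.single j 1) : ℤ) : ℝ) := by
  simp [extR, mul_comm]

lemma extR_cast (φ : (Fin n → ℤ) →+ ℤ) (g : Fin n → ℤ) :
    extR φ (castVec g) = ((φ g : ℤ) : ℝ) := by
  rw [extR_apply, map_int φ g]
  push_cast
  rfl

lemma ratInt (dd : ℕ) (q : ℚ) (h : (q.den : ℕ) ∣ dd) :
    (((dd / q.den : ℕ) : ℚ) * (q.num : ℚ)) = (dd : ℚ) * q := by
  obtain ⟨m, hm⟩ := h
  subst hm
  rw [Nat.mul_div_cancel_left m q.den_pos]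
  have hden : (q.den : ℚ) ≠ 0 := by exact_mod_cast q.den_nz
  have hq : (q.num : ℚ) = q * q.den := by
    have h0 := Rat.num_div_den q
    rw [div_eq_iff hden] at h0
    exact h0
  push_cast
  rw [hq]
  ring

lemma denom_clear {ι : Type*} [Fintype ι] (u : ι → (Fin n → ℤ)) (g : Fin n → ℤ)
    (h : castVecQ g ∈ Submodule.span ℚ (Set.range fun j => castVecQ (u j))) :
    ∃ m : ℕ, m ≠ 0 ∧ ∃ z : ι → ℤ, (m : ℤ) • g = ∑ j, z j • u j := by
  rw [Submodule.mem_span_range_iff_exists_fun] at h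
  obtain ⟨c, hc⟩ := h
  set m : ℕ := ∏ j, (c j).den with hm
  have hmne : m ≠ 0 := Finset.prod_ne_zero_iff.mpr fun j _ => (c j).den_nz
  refine ⟨m, hmne, fun j => (m / (c j).den : ℕ) * (c j).num, ?_⟩
  apply castVecQ_injective
  have key : ∀ j : ι, ((((m / (c j).den : ℕ) : ℤ) * (c j).num : ℤ) : ℚ) = (m : ℚ) * c j := by
    intro j
    push_cast
    exact ratInt m (c j) (Finset.dvd_prod_of_mem _ (Finset.mem_univ j))
  calc castVecQ ((m:ℤ) • g) = (m:ℚ) • castVecQ g := by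
          funext t; simp only [castVecQ, Pi.smul_apply, smul_eq_mul]; push_cast; ring
    _ = (m:ℚ) • ∑ j, c j • castVecQ (u j) := by rw [hc]
    _ = ∑ j, ((m:ℚ) * c j) • castVecQ (u j) := by rw [Finset.smul_sum]; simp [smul_smul]
    _ = ∑ j, ((((m / (c j).den : ℕ) : ℤ) * (c j).num : ℚ)) • castVecQ (u j) := by
          refine Finset.sum_congr rfl fun j _ => ?_
          rw [← key j]
          norm_cast
    _ = castVecQ (∑ j, (((m / (c j).den : ℕ) : ℤ) * (c j).num) • u j) := by
          funext t
          simp only [castVecQ, Finset.sum_apply, Pi.smul_apply, smul_eq_mul]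
          push_cast
          rfl

section Datum

variable (D : ToricFanoDatum n)

lemma sumR : ∑ j, (D.a j : ℝ) • castVec (D.v j) = 0 := by
  funext t
  rw [Finset.sum_apply]
  have h := congrFun D.sum_av t
  rw [Finset.sum_apply] at h
  simp only [Pi.smul_apply, smul_eq_mul] at h
  simp only [Pi.smul_apply, smul_eq_mul, castVec, Pi.zero_apply]
  have : ((∑ j, (D.a j : ℤ) * D.v j t : ℤ) : ℝ) = ((0 : ℤ) : ℝ) := by
    exact_mod_cast congrArg (fun z : ℤ => (z : ℝ)) h
  push_cast at this
  convert this using 1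

lemma span_top (l : Fin (n+1)) :
    ⊤ ≤ Submodule.span ℝ (Set.range fun j : {j : Fin (n+1) // j ≠ l} => castVec (D.v j)) := by
  intro x _
  obtain ⟨c, -, hx⟩ := D.span_cone x
  rw [hx]
  apply Submodule.sum_mem
  intro j _
  by_cases hj : j = l
  · subst hj
    apply Submodule.smul_mem
    have hal : (D.a j : ℝ) ≠ 0 := by exact_mod_cast (D.a_pos j).ne'
    have hsum := sumR D
    have hsplit := Finset.add_sum_erase Finset.univ
      (fun j' => (D.a j' : ℝ) • castVec (D.v j')) (Finset.mem_univ j)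
    rw [hsum] at hsplit
    have h1 : (D.a j : ℝ) • castVec (D.v j)
        = - ∑ j' ∈ Finset.univ.erase j, (D.a j' : ℝ) • castVec (D.v j') :=
      eq_neg_of_add_eq_zero_left hsplit
    have h2 : (D.a j : ℝ) • castVec (D.v j) ∈
        Submodule.span ℝ (Set.range fun j' : {j' : Fin (n+1) // j' ≠ j} => castVec (D.v j')) := by
      rw [h1]
      refine Submodule.neg_mem _ (Submodule.sum_mem _ fun j' hj' => ?_)
      exact Submodule.smul_mem _ _
        (Submodule.subset_span ⟨⟨j', (Finset.mem_erase.mp hj').1⟩, rfl⟩)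
    have h3 := Submodule.smul_mem _ ((D.a j : ℝ))⁻¹ h2
    rwa [inv_smul_smul₀ hal] at h3
  · exact Submodule.smul_mem _ _ (Submodule.subset_span ⟨⟨j, hj⟩, rfl⟩)

lemma cardNe (l : Fin (n+1)) : Fintype.card {j : Fin (n+1) // j ≠ l} = n := by
  have : Fintype.card {j : Fin (n+1) // j ≠ l}
      = Fintype.card (Fin (n+1)) - Fintype.card {j : Fin (n+1) // j = l} := by
    classical
    exact Fintype.card_subtype_compl _
  rw [this, Fintype.card_subtype_eq, Fintype.card_fin]; omega

lemma indepR (l : Fin (n+1)) :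
    LinearIndependent ℝ (fun j : {j : Fin (n+1) // j ≠ l} => castVec (D.v j)) := by
  apply linearIndependent_of_top_le_span_of_card_eq_finrank (span_top D l)
  rw [cardNe, Module.finrank_pi, Fintype.card_fin]

lemma indepQ (l : Fin (n+1)) :
    LinearIndependent ℚ (fun j : {j : Fin (n+1) // j ≠ l} => castVecQ (D.v j)) := by
  have h1 : LinearIndependent ℚ (fun j : {j : Fin (n+1) // j ≠ l} => castVec (D.v j)) := by
    refine (indepR D l).restrict_scalars ?_
    intro a b hab
    have : (a : ℝ) = (b : ℝ) := by simpa [Rat.smul_def] using hab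
    exact_mod_cast this
  have h2 : LinearIndependent ℚ
      (castQR ∘ fun j : {j : Fin (n+1) // j ≠ l} => castVecQ (D.v j)) := by
    have : (castQR ∘ fun j : {j : Fin (n+1) // j ≠ l} => castVecQ (D.v j))
        = fun j : {j : Fin (n+1) // j ≠ l} => castVec (D.v j) := by
      funext j; exact castQR_cast _
    rw [this]; exact h1
  exact LinearIndependent.of_comp castQR h2

lemma spanQ_top (hn : n ≠ 0) (l : Fin (n+1)) :
    Submodule.span ℚ (Set.range fun j : {j : Fin (n+1) // j ≠ l} => castVecQ (D.v j)) = ⊤ := by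
  haveI : Nontrivial (Fin (n+1)) := by
    obtain ⟨m, rfl⟩ := Nat.exists_eq_succ_of_ne_zero hn
    infer_instance
  haveI : Nonempty {j : Fin (n+1) // j ≠ l} := by
    obtain ⟨j, hj⟩ := exists_ne l
    exact ⟨⟨j, hj⟩⟩
  apply (indepQ D l).span_eq_top_of_card_eq_finrank
  rw [cardNe, Module.finrank_pi, Fintype.card_fin]

lemma notMemQ {k l : Fin (n+1)} (hkl : k ≠ l) :
    castVecQ (D.v k) ∉ Submodule.span ℚ
      (Set.range fun j : {j : Fin (n+1) // j ≠ k ∧ j ≠ l} => castVecQ (D.v j)) := by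
  intro hmem
  have hind := indepQ D l
  have h2 := hind.notMem_span_image (s := {j : {j : Fin (n+1) // j ≠ l} | (j : Fin (n+1)) ≠ k})
    (x := ⟨k, hkl⟩) (by simp)
  apply h2
  refine Submodule.span_mono ?_ hmem
  rintro w ⟨⟨j, hjk, hjl⟩, rfl⟩
  exact ⟨⟨j, hjl⟩, hjk, rfl⟩

end Datum

section PhiSection

variable (D : ToricFanoDatum n)

lemma mem_latticeMu_iff {k l : Fin (n+1)} (g : Fin n → ℤ) : g ∈ D.latticeMu k l ↔
    castVec g ∈ Submodule.span ℝ
      (Set.range fun j : {j : Fin (n+1) // j ≠ k ∧ j ≠ l} => castVec (D.v j)) := by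
  have hset : {w : Fin n → ℝ | ∃ i, i ≠ k ∧ i ≠ l ∧ w = castVec (D.v i)} =
      Set.range fun j : {j : Fin (n+1) // j ≠ k ∧ j ≠ l} => castVec (D.v j) := by
    ext w; constructor
    · rintro ⟨i, h1, h2, rfl⟩; exact ⟨⟨i, h1, h2⟩, rfl⟩
    · rintro ⟨⟨i, h1, h2⟩, rfl⟩; exact ⟨i, h1, h2, rfl⟩
  unfold ToricFanoDatum.latticeMu
  rw [AddSubgroup.mem_comap, hset]
  rfl

lemma v_mem_latticeMu {k l j : Fin (n+1)} (hj1 : j ≠ k) (hj2 : j ≠ l) :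
    D.v j ∈ D.latticeMu k l := by
  rw [mem_latticeMu_iff]
  exact Submodule.subset_span ⟨⟨j, hj1, hj2⟩, rfl⟩

/-- A primitive integral functional cutting out `latticeMu k l`. -/
structure PhiPkg (D : ToricFanoDatum n) (k l : Fin (n+1)) where
  φ : (Fin n → ℤ) →+ ℤ
  surj : Function.Surjective φ
  mem_iff : ∀ g, g ∈ D.latticeMu k l ↔ φ g = 0
  memQ : ∀ g, g ∈ D.latticeMu k l → castVecQ g ∈ Submodule.span ℚ
    (Set.range fun j : {j : Fin (n+1) // j ≠ k ∧ j ≠ l} => castVecQ (D.v j))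
  vk : φ (D.v k) ≠ 0
  vl : φ (D.v l) ≠ 0

lemma rangeSwapQ (k l : Fin (n+1)) :
    (Set.range fun j : {j : Fin (n+1) // j ≠ k ∧ j ≠ l} => castVecQ (D.v j))
      = (Set.range fun j : {j : Fin (n+1) // j ≠ l ∧ j ≠ k} => castVecQ (D.v j)) := by
  ext w; constructor
  · rintro ⟨⟨i, h1, h2⟩, rfl⟩; exact ⟨⟨i, h2, h1⟩, rfl⟩
  · rintro ⟨⟨i, h1, h2⟩, rfl⟩; exact ⟨⟨i, h2, h1⟩, rfl⟩

lemma phiPkg_exists {k l : Fin (n+1)} (hn : n ≠ 0) (hkl : k ≠ l) :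
    Nonempty (PhiPkg D k l) := by
  classical
  set Wq := Submodule.span ℚ
    (Set.range fun j : {j : Fin (n+1) // j ≠ k ∧ j ≠ l} => castVecQ (D.v j)) with hWqdef
  have hnk : castVecQ (D.v k) ∉ Wq := notMemQ D hkl
  obtain ⟨f, hfk, hfbot⟩ := Submodule.exists_dual_map_eq_bot_of_notMem hnk inferInstance
  have hfW : ∀ w ∈ Wq, f w = 0 := by
    intro w hw
    have h1 : f w ∈ Wq.map f := Submodule.mem_map_of_mem hw
    rw [hfbot] at h1
    exact (Submodule.mem_bot ℚ).mp h1
  set qv : Fin n → ℚ := fun j => f (Pi.single j 1) with hqv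
  set dd : ℕ := ∏ j, (qv j).den with hdd
  have hddne : dd ≠ 0 := Finset.prod_ne_zero_iff.mpr fun j _ => (qv j).den_nz
  set z : Fin n → ℤ := fun j => ((dd / (qv j).den : ℕ) : ℤ) * (qv j).num with hzdef
  have hzq : ∀ j, ((z j : ℤ) : ℚ) = (dd : ℚ) * qv j := by
    intro j
    rw [hzdef]
    push_cast
    exact ratInt dd (qv j) (Finset.dvd_prod_of_mem _ (Finset.mem_univ j))
  set φ₀ : (Fin n → ℤ) →+ ℤ := AddMonoidHom.mk' (fun g => ∑ j, z j * g j) (by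
    intro x y
    simp only [Pi.add_apply, mul_add]
    rw [Finset.sum_add_distrib]) with hφ₀def
  have hφ₀app : ∀ g : Fin n → ℤ, φ₀ g = ∑ j, z j * g j := fun g => rfl
  have hdecomp : ∀ g : Fin n → ℤ, castVecQ g = ∑ j, ((g j : ℚ)) • (Pi.single j 1 : Fin n → ℚ) := by
    intro g
    funext t
    rw [Finset.sum_apply]
    simp [castVecQ, Pi.single_apply]
  have hφ₀f : ∀ g : Fin n → ℤ, ((φ₀ g : ℤ) : ℚ) = (dd : ℚ) * f (castVecQ g) := by
    intro g
    have h1 : f (castVecQ g) = ∑ j, (g j : ℚ) * qv j := by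
      conv_lhs => rw [hdecomp g]
      rw [map_sum]
      refine Finset.sum_congr rfl fun j _ => ?_
      rw [map_smul, smul_eq_mul, hqv]
    rw [h1, Finset.mul_sum, hφ₀app]
    push_cast
    refine Finset.sum_congr rfl fun j _ => ?_
    rw [← mul_assoc, mul_comm ((dd : ℚ)) ((g j : ℚ)), mul_assoc, ← hzq j]
    ring
  obtain ⟨Dg, hDg⟩ := Int.subgroup_cyclic φ₀.range
  have hdvd : ∀ g : Fin n → ℤ, Dg ∣ φ₀ g := by
    intro g
    have hmem : φ₀ g ∈ AddSubgroup.closure ({Dg} : Set ℤ) := by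
      rw [← hDg]; exact ⟨g, rfl⟩
    obtain ⟨m, hm⟩ := AddSubgroup.mem_closure_singleton.mp hmem
    exact ⟨m, by rw [← hm]; rw [smul_eq_mul]; ring⟩
  have hddq : (dd : ℚ) ≠ 0 := by exact_mod_cast hddne
  have hφ₀vk : φ₀ (D.v k) ≠ 0 := by
    intro hh
    have h2 := hφ₀f (D.v k)
    rw [hh] at h2
    have h3 : (dd : ℚ) * f (castVecQ (D.v k)) = 0 := by exact_mod_cast h2.symm
    exact hfk ((mul_eq_zero.mp h3).resolve_left hddq)
  have hDgne : Dg ≠ 0 := by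
    intro h0
    obtain ⟨m, hm⟩ := hdvd (D.v k)
    rw [h0, zero_mul] at hm
    exact hφ₀vk hm
  set φ : (Fin n → ℤ) →+ ℤ := AddMonoidHom.mk' (fun g => φ₀ g / Dg) (by
    intro x y
    obtain ⟨x', hx'⟩ := hdvd x
    obtain ⟨y', hy'⟩ := hdvd y
    show φ₀ (x + y) / Dg = φ₀ x / Dg + φ₀ y / Dg
    rw [map_add, hx', hy', ← mul_add, Int.mul_ediv_cancel_left _ hDgne,
      Int.mul_ediv_cancel_left _ hDgne, Int.mul_ediv_cancel_left _ hDgne]) with hφdef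
  have hφapp : ∀ g, φ g = φ₀ g / Dg := fun g => rfl
  have hφ₀φ : ∀ g, φ₀ g = Dg * φ g := by
    intro g
    obtain ⟨w, hw⟩ := hdvd g
    rw [hφapp, hw, Int.mul_ediv_cancel_left _ hDgne]
  -- A : lattice → φ₀ = 0
  have hA : ∀ g : Fin n → ℤ, g ∈ D.latticeMu k l → φ₀ g = 0 := by
    intro g hg
    rw [mem_latticeMu_iff] at hg
    have hsub : Submodule.span ℝ
        (Set.range fun j : {j : Fin (n+1) // j ≠ k ∧ j ≠ l} => castVec (D.v j))
        ≤ LinearMap.ker (extR φ₀) := by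
      rw [Submodule.span_le]
      rintro w ⟨⟨jj, hj1, hj2⟩, rfl⟩
      have hφ₀vj : φ₀ (D.v jj) = 0 := by
        have hWmem : castVecQ (D.v jj) ∈ Wq := Submodule.subset_span ⟨⟨jj, hj1, hj2⟩, rfl⟩
        have h2 := hφ₀f (D.v jj)
        rw [hfW _ hWmem, mul_zero] at h2
        exact_mod_cast h2
      simp only [SetLike.mem_coe, LinearMap.mem_ker]
      rw [extR_cast, hφ₀vj]
      norm_num
    have h3 := hsub hg
    rw [LinearMap.mem_ker, extR_cast] at h3
    exact_mod_cast h3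
  -- B : φ₀ = 0 → ∈ Wq
  have hB : ∀ g : Fin n → ℤ, φ₀ g = 0 → castVecQ g ∈ Wq := by
    intro g hg
    have hf0 : f (castVecQ g) = 0 := by
      have h2 := hφ₀f g
      rw [hg] at h2
      have : (0 : ℚ) = (dd : ℚ) * f (castVecQ g) := by exact_mod_cast h2
      have hddq : (dd : ℚ) ≠ 0 := by exact_mod_cast hddne
      field_simp at this
      exact (mul_eq_zero.mp this.symm).resolve_left hddq
    have htop : castVecQ g ∈ Submodule.span ℚ
        (Set.range fun j : {j : Fin (n+1) // j ≠ l} => castVecQ (D.v j)) := by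
      rw [spanQ_top D hn l]; trivial
    have hsetsplit : (Set.range fun j : {j : Fin (n+1) // j ≠ l} => castVecQ (D.v j))
        = (Set.range fun j : {j : Fin (n+1) // j ≠ k ∧ j ≠ l} => castVecQ (D.v j))
          ∪ {castVecQ (D.v k)} := by
      ext w; constructor
      · rintro ⟨⟨jj, hjl⟩, rfl⟩
        by_cases hjk : jj = k
        · subst hjk; right; rfl
        · left; exact ⟨⟨jj, hjk, hjl⟩, rfl⟩
      · rintro (⟨⟨jj, hjk, hjl⟩, rfl⟩ | hw)
        · exact ⟨⟨jj, hjl⟩, rfl⟩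
        · rw [Set.mem_singleton_iff] at hw
          exact ⟨⟨k, hkl⟩, hw.symm⟩
    rw [hsetsplit, Submodule.span_union] at htop
    obtain ⟨w, hw, zz, hzz, hsum⟩ := Submodule.mem_sup.mp htop
    rw [Submodule.mem_span_singleton] at hzz
    obtain ⟨q, rfl⟩ := hzz
    have hfq : f (castVecQ g) = f w + q * f (castVecQ (D.v k)) := by
      rw [← hsum, map_add, map_smul, smul_eq_mul]
    rw [hf0, hfW w hw] at hfq
    have h5 : q * f (castVecQ (D.v k)) = 0 := by linarith
    have hq0 : q = 0 := (mul_eq_zero.mp h5).resolve_right hfk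
    rw [hq0, zero_smul, add_zero] at hsum
    rw [← hsum]
    exact hw
  -- C : ∈ Wq → lattice
  have hC : ∀ g : Fin n → ℤ, castVecQ g ∈ Wq → g ∈ D.latticeMu k l := by
    intro g hg
    rw [mem_latticeMu_iff]
    have h1 : castQR (castVecQ g) ∈ Submodule.map (castQR (n := n)) Wq :=
      Submodule.mem_map_of_mem hg
    rw [hWqdef, Submodule.map_span] at h1
    have himg : castQR (n := n) '' (Set.range fun j : {j : Fin (n+1) // j ≠ k ∧ j ≠ l} =>
        castVecQ (D.v j)) = Set.range fun j : {j : Fin (n+1) // j ≠ k ∧ j ≠ l} =>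
        castVec (D.v j) := by
      rw [← Set.range_comp]
      refine congrArg _ ?_
      funext jj
      exact castQR_cast _
    rw [himg, castQR_cast] at h1
    have h2 := Submodule.span_le_restrictScalars ℚ ℝ
      (Set.range fun j : {j : Fin (n+1) // j ≠ k ∧ j ≠ l} => castVec (D.v j))
    exact h2 h1
  -- surjectivity
  have hDgmem : Dg ∈ φ₀.range := by
    rw [hDg]
    exact AddSubgroup.subset_closure rfl
  obtain ⟨g₀, hg₀⟩ := hDgmem
  have hφg₀ : φ g₀ = 1 := by
    have h1 := hφ₀φ g₀
    rw [hg₀] at h1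
    have h2 : Dg * 1 = Dg * φ g₀ := by rw [mul_one]; exact h1
    exact (mul_left_cancel₀ hDgne h2).symm
  have hsurj : Function.Surjective φ := by
    intro m
    refine ⟨m • g₀, ?_⟩
    rw [map_zsmul, hφg₀, smul_eq_mul, mul_one]
  have hiff : ∀ g, g ∈ D.latticeMu k l ↔ φ g = 0 := by
    intro g
    constructor
    · intro hg
      rw [hφapp, hA g hg]
      exact Int.zero_ediv Dg
    · intro hg
      have h0 : φ₀ g = 0 := by rw [hφ₀φ g, hg, mul_zero]
      exact hC g (hB g h0)
  have hvk : φ (D.v k) ≠ 0 := by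
    intro hh
    apply hφ₀vk
    rw [hφ₀φ, hh, mul_zero]
  have hvl : φ (D.v l) ≠ 0 := by
    intro hh
    have h0 : φ₀ (D.v l) = 0 := by rw [hφ₀φ, hh, mul_zero]
    have hWl := hB _ h0
    rw [hWqdef, rangeSwapQ] at hWl
    exact notMemQ D hkl.symm hWl
  exact ⟨⟨φ, hsurj, hiff, fun g hg => hB g (hA g hg), hvk, hvl⟩⟩

end PhiSection

section Tower

variable (D : ToricFanoDatum n)

lemma tower {k l : Fin (n+1)} (hkl : k ≠ l) (P : PhiPkg D k l) :
    D.multSigma l = D.multMu k l * (P.φ (D.v k)).natAbs := by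
  classical
  set Λ := D.latticeMu k l with hΛ
  set S := AddSubgroup.closure {w : Fin n → ℤ | ∃ i, i ≠ k ∧ i ≠ l ∧ w = D.v i} with hS
  set B := AddSubgroup.closure {w : Fin n → ℤ | ∃ i, i ≠ l ∧ w = D.v i} with hB
  set C := AddSubgroup.closure ({D.v k} : Set (Fin n → ℤ)) with hC
  have hSsubΛ : S ≤ Λ := by
    rw [hS, AddSubgroup.closure_le]
    rintro w ⟨i, h1, h2, rfl⟩
    exact v_mem_latticeMu D h1 h2
  have hBset : {w : Fin n → ℤ | ∃ i, i ≠ l ∧ w = D.v i}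
      = {w : Fin n → ℤ | ∃ i, i ≠ k ∧ i ≠ l ∧ w = D.v i} ∪ {D.v k} := by
    ext w; constructor
    · rintro ⟨i, h1, rfl⟩
      by_cases hik : i = k
      · subst hik; right; rfl
      · left; exact ⟨i, hik, h1, rfl⟩
    · rintro (⟨i, h1, h2, rfl⟩ | hw)
      · exact ⟨i, h2, rfl⟩
      · rw [Set.mem_singleton_iff] at hw; exact ⟨k, hkl, hw⟩
  have hBSC : B = S ⊔ C := by rw [hB, hBset, AddSubgroup.closure_union, ← hS, ← hC]
  set T := Λ ⊔ C with hT
  have hBsubT : B ≤ T := by rw [hBSC, hT]; exact sup_le_sup_right hSsubΛ _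
  have hTcomap : T = AddSubgroup.comap P.φ (AddSubgroup.zmultiples (P.φ (D.v k))) := by
    apply le_antisymm
    · rw [hT]
      apply sup_le
      · intro g hg
        rw [AddSubgroup.mem_comap]
        have h0 : P.φ g = 0 := (P.mem_iff g).mp hg
        rw [h0]
        exact zero_mem _
      · rw [hC, AddSubgroup.closure_le]
        rintro w hw
        rw [Set.mem_singleton_iff] at hw; subst hw
        rw [SetLike.mem_coe, AddSubgroup.mem_comap]
        exact AddSubgroup.mem_zmultiples _
    · intro g hg
      rw [AddSubgroup.mem_comap] at hg
      obtain ⟨m, hm⟩ := AddSubgroup.mem_zmultiples_iff.mp hg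
      have hmem1 : g - m • D.v k ∈ Λ := by
        apply (P.mem_iff _).mpr
        rw [map_sub, map_zsmul, hm, sub_self]
      have hg2 : g = (g - m • D.v k) + m • D.v k := by abel
      rw [hT, hg2]
      exact add_mem (AddSubgroup.mem_sup_left hmem1)
        (AddSubgroup.mem_sup_right
          (AddSubgroup.zsmul_mem _ (AddSubgroup.subset_closure (Set.mem_singleton _)) m))
  have hTindex : T.index = (P.φ (D.v k)).natAbs := by
    rw [hTcomap, AddSubgroup.index_comap_of_surjective _ P.surj, Int.index_zmultiples]
  have hTsup : T = Λ ⊔ B := by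
    rw [hBSC, hT, ← sup_assoc, sup_eq_left.mpr hSsubΛ]
  have hinf : B ⊓ Λ = S := by
    apply le_antisymm
    · intro g hg
      rw [AddSubgroup.mem_inf] at hg
      obtain ⟨hgB, hgΛ⟩ := hg
      rw [hBSC] at hgB
      obtain ⟨s, hs, c, hc, rfl⟩ := AddSubgroup.mem_sup.mp hgB
      rw [hC] at hc
      obtain ⟨m, hm⟩ := AddSubgroup.mem_closure_singleton.mp hc
      have hφs : P.φ s = 0 := (P.mem_iff s).mp (hSsubΛ hs)
      have hφg : P.φ (s + c) = 0 := (P.mem_iff _).mp hgΛ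
      rw [map_add, hφs, zero_add, ← hm, map_zsmul, smul_eq_mul] at hφg
      have hm0 : m = 0 := by
        rcases mul_eq_zero.mp hφg with h | h
        · exact h
        · exact absurd h P.vk
      rw [hm0, zero_smul] at hm
      rw [← hm, add_zero]
      exact hs
    · exact le_inf (hBSC ▸ le_sup_left) hSsubΛ
  have hrel : B.relIndex T = D.multMu k l := by
    rw [hTsup, AddSubgroup.relIndex_sup_right, ← AddSubgroup.inf_relIndex_right, hinf]
    rfl
  have hmain := AddSubgroup.relIndex_mul_index hBsubT
  rw [hTindex, hrel] at hmain
  exact hmain.symm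

lemma multSigma_ne_zero (hn : n ≠ 0) (l : Fin (n+1)) : D.multSigma l ≠ 0 := by
  classical
  set B := AddSubgroup.closure {w : Fin n → ℤ | ∃ i, i ≠ l ∧ w = D.v i} with hB
  have hgen : ∀ t : Fin n, ∃ m : ℕ, m ≠ 0 ∧ (m : ℤ) • (Pi.single t 1 : Fin n → ℤ) ∈ B := by
    intro t
    have hmem : castVecQ (Pi.single t 1) ∈ Submodule.span ℚ
        (Set.range fun j : {j : Fin (n+1) // j ≠ l} => castVecQ (D.v j)) := by
      rw [spanQ_top D hn l]; trivial
    obtain ⟨m, hm, z, hz⟩ := denom_clear (fun j : {j : Fin (n+1) // j ≠ l} => D.v j) _ hmem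
    refine ⟨m, hm, ?_⟩
    rw [hz]
    refine AddSubgroup.sum_mem _ fun j _ => AddSubgroup.zsmul_mem _ ?_ _
    refine AddSubgroup.subset_closure ?_
    exact ⟨j.1, j.2, rfl⟩
  choose mm hmmne hmm using hgen
  set M : ℕ := ∏ t, mm t with hM
  have hMne : M ≠ 0 := Finset.prod_ne_zero_iff.mpr fun t _ => hmmne t
  have hdvd : ∀ t, mm t ∣ M := fun t => Finset.dvd_prod_of_mem _ (Finset.mem_univ t)
  have huni : ∀ g : Fin n → ℤ, (M : ℤ) • g ∈ B := by
    intro g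
    have hdec : (M : ℤ) • g
        = ∑ t, (g t * ((M / mm t : ℕ) : ℤ)) • ((mm t : ℤ) • (Pi.single t 1 : Fin n → ℤ)) := by
      funext s
      rw [Pi.smul_apply, Finset.sum_apply]
      simp only [Pi.smul_apply, smul_eq_mul, Pi.single_apply]
      rw [Finset.sum_eq_single s]
      · have hms : ((mm s : ℕ) : ℤ) * ((M / mm s : ℕ) : ℤ) = (M : ℤ) := by
          exact_mod_cast Nat.mul_div_cancel' (hdvd s)
        simp only [eq_self_iff_true, if_true, if_pos, mul_one]
        linear_combination (-(g s)) * hms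
      · intro t _ hts
        rw [if_neg (fun h : s = t => hts h.symm)]
        ring
      · intro h; exact absurd (Finset.mem_univ s) h
    rw [hdec]
    exact AddSubgroup.sum_mem _ fun t _ => AddSubgroup.zsmul_mem _ (hmm t) _
  haveI : NeZero M := ⟨hMne⟩
  set qm : (Fin n → ℤ) →+ (Fin n → ZMod M) := AddMonoidHom.mk'
    (fun g t => ((g t : ℤ) : ZMod M)) (by
      intro x y; funext t; push_cast; simp) with hqmdef
  have hqmsurj : Function.Surjective qm := by
    intro x
    refine ⟨fun t => ((x t).val : ℤ), ?_⟩
    funext t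
    show (((x t).val : ℤ) : ZMod M) = x t
    push_cast
    exact ZMod.natCast_rightInverse (x t)
  have hker : qm.ker ≤ B := by
    intro g hg
    rw [AddMonoidHom.mem_ker] at hg
    have hdv : ∀ t, (M : ℤ) ∣ g t := by
      intro t
      have h1 : ((g t : ℤ) : ZMod M) = 0 := congrFun hg t
      exact (ZMod.intCast_zmod_eq_zero_iff_dvd _ _).mp h1
    choose w hw using hdv
    have hgw : g = (M : ℤ) • w := by
      funext t; rw [Pi.smul_apply, smul_eq_mul, ← hw t]
    rw [hgw]
    exact huni w
  haveI hfin1 : Finite ((Fin n → ℤ) ⧸ qm.ker) :=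
    Finite.of_equiv _ (QuotientAddGroup.quotientKerEquivOfSurjective qm hqmsurj).symm.toEquiv
  have hker' : qm.ker ≤ B.comap (AddMonoidHom.id (Fin n → ℤ)) := fun g hg => hker hg
  have hsurj2 : Function.Surjective
      (QuotientAddGroup.map qm.ker B (AddMonoidHom.id (Fin n → ℤ)) hker') := by
    intro x
    obtain ⟨g, rfl⟩ := QuotientAddGroup.mk_surjective x
    refine ⟨QuotientAddGroup.mk g, ?_⟩
    rw [QuotientAddGroup.map_mk]
    rfl
  haveI hfin2 : Finite ((Fin n → ℤ) ⧸ B) := Finite.of_surjective _ hsurj2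
  exact AddSubgroup.index_ne_zero_of_finite

lemma balance {k l : Fin (n+1)} (hkl : k ≠ l) (P : PhiPkg D k l) :
    (D.a k : ℤ) * P.φ (D.v k) + (D.a l : ℤ) * P.φ (D.v l) = 0 := by
  classical
  have h0 : P.φ (∑ j, (D.a j : ℤ) • D.v j) = 0 := by rw [D.sum_av, map_zero]
  rw [map_sum] at h0
  have h1 : ∑ j, P.φ ((D.a j : ℤ) • D.v j) = ∑ j, (D.a j : ℤ) * P.φ (D.v j) :=
    Finset.sum_congr rfl fun j _ => by rw [map_zsmul, smul_eq_mul]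
  rw [h1] at h0
  have hsub : ∑ j ∈ ({k, l} : Finset (Fin (n+1))), (D.a j : ℤ) * P.φ (D.v j)
      = ∑ j, (D.a j : ℤ) * P.φ (D.v j) := by
    apply Finset.sum_subset (Finset.subset_univ _)
    intro x _ hx
    simp only [Finset.mem_insert, Finset.mem_singleton] at hx
    push_neg at hx
    rw [(P.mem_iff _).mp (v_mem_latticeMu D hx.1 hx.2), mul_zero]
  rw [← hsub, Finset.sum_pair hkl] at h0
  exact h0

lemma theta {i : Fin (n+1)} (h01 : (0 : Fin (n+1)) ≠ 1) (hi0 : i ≠ 0) (hi1 : i ≠ 1)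
    (P1 : PhiPkg D 0 1) (P2 : PhiPkg D i 0) (P3 : PhiPkg D i 1) :
    ∃ c : ℤ, P2.φ (D.v 0) * P3.φ (D.v i) = c * P1.φ (D.v 0) := by
  classical
  set θ : (Fin n → ℤ) →+ ℤ := AddMonoidHom.mk'
    (fun g => P3.φ (D.v i) * P2.φ g - P2.φ (D.v i) * P3.φ g) (by
      intro x y
      show P3.φ (D.v i) * P2.φ (x + y) - P2.φ (D.v i) * P3.φ (x + y) = _
      rw [map_add, map_add]
      ring) with hθdef
  have hθapp : ∀ g, θ g = P3.φ (D.v i) * P2.φ g - P2.φ (D.v i) * P3.φ g := fun g => rfl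
  have hgen : ∀ j : Fin (n+1), j ≠ 0 → j ≠ 1 → θ (D.v j) = 0 := by
    intro j hj0 hj1
    by_cases hji : j = i
    · subst hji; rw [hθapp]; ring
    · rw [hθapp, (P2.mem_iff _).mp (v_mem_latticeMu D hji hj0),
        (P3.mem_iff _).mp (v_mem_latticeMu D hji hj1)]
      ring
  have hlat : ∀ g, g ∈ D.latticeMu 0 1 → θ g = 0 := by
    intro g hg
    have hQ := P1.memQ g hg
    have hsub : Submodule.span ℚ
        (Set.range fun j : {j : Fin (n+1) // j ≠ 0 ∧ j ≠ 1} => castVecQ (D.v j))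
        ≤ LinearMap.ker (extQ θ) := by
      rw [Submodule.span_le]
      rintro w ⟨⟨jj, hj0, hj1⟩, rfl⟩
      simp only [SetLike.mem_coe, LinearMap.mem_ker]
      rw [extQ_cast, hgen jj hj0 hj1]
      norm_num
    have h2 := hsub hQ
    rw [LinearMap.mem_ker, extQ_cast] at h2
    exact_mod_cast h2
  obtain ⟨w₁, hw₁⟩ := P1.surj 1
  refine ⟨θ w₁, ?_⟩
  have hdec : D.v 0 - (P1.φ (D.v 0)) • w₁ ∈ D.latticeMu 0 1 := by
    apply (P1.mem_iff _).mpr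
    rw [map_sub, map_zsmul, hw₁, smul_eq_mul, mul_one, sub_self]
  have h2 := hlat _ hdec
  rw [map_sub, map_zsmul, smul_eq_mul, sub_eq_zero] at h2
  have h3 : θ (D.v 0) = P3.φ (D.v i) * P2.φ (D.v 0) := by
    rw [hθapp, (P3.mem_iff _).mp (v_mem_latticeMu D (Ne.symm hi0) h01)]
    ring
  rw [h3] at h2
  linarith [h2]

end Tower

end ToricAux


open ToricAux

/-- For every `n ≥ 1`, every index `i` with `3 ≤ i ≤ n + 1` in the paper's 1-based
indexing (i.e. `i : Fin (n+1)` with `2 ≤ i`), and every `ε > 0`, the set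
`𝓜ᵢ ∩ {x : ε < x}` is finite. -/
theorem Mset_inter_gt_finite (n : ℕ) (hn : 1 ≤ n) (i : Fin (n + 1)) (hi : 2 ≤ (i : ℕ))
    (ε : ℝ) (hε : 0 < ε) : (Mset n i ∩ {x : ℝ | ε < x}).Finite := by
  classical
  set K : ℕ := ⌈ε⁻¹⌉₊ with hK
  set F : Finset ℝ := ((Finset.range (K^2+1)) ×ˢ (Finset.range (K^2+1))).image
    (fun pr => (pr.1 : ℝ) / (pr.2 : ℝ)) with hF
  apply Set.Finite.subset (F.finite_toSet)
  rintro x ⟨⟨D, hNorm, hxeq⟩, hxgt⟩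
  rw [Set.mem_setOf_eq] at hxgt
  have hn2 : 2 ≤ n := by
    have := i.isLt
    omega
  have hnne : n ≠ 0 := by omega
  have hval1 : ((1 : Fin (n+1)) : ℕ) = 1 := by
    rw [Fin.val_one']
    exact Nat.mod_eq_of_lt (by omega)
  have h01 : (0 : Fin (n+1)) ≠ 1 := by
    intro h
    have h2 := congrArg Fin.val h
    rw [Fin.val_zero, hval1] at h2
    omega
  have hi0 : i ≠ 0 := by
    intro h
    rw [h, Fin.val_zero] at hi
    omega
  have hi1 : i ≠ 1 := by
    intro h
    rw [h, hval1] at hi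
    omega
  obtain ⟨P1⟩ := phiPkg_exists D hnne h01
  obtain ⟨P2⟩ := phiPkg_exists D hnne hi0
  obtain ⟨P3⟩ := phiPkg_exists D hnne hi1
  set h1 : ℕ := (P1.φ (D.v 0)).natAbs with hh1def
  set p : ℕ := (P2.φ (D.v i)).natAbs with hpdef
  set r : ℕ := (P2.φ (D.v 0)).natAbs with hrdef
  set q : ℕ := (P3.φ (D.v i)).natAbs with hqdef
  have hF1 : D.multSigma 1 = D.multMu 0 1 * h1 := tower D h01 P1
  have hF2 : D.multSigma 1 = D.multMu i 1 * q := tower D hi1 P3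
  have hF3 : D.multSigma 0 = D.multMu i 0 * p := tower D hi0 P2
  have hbal := balance D hi0 P2
  have hF4 : D.a i * p = D.a 0 * r := by
    have h5 : ((D.a i : ℤ) * P2.φ (D.v i)).natAbs = ((D.a 0 : ℤ) * P2.φ (D.v 0)).natAbs := by
      have h6 : (D.a i : ℤ) * P2.φ (D.v i) = -((D.a 0 : ℤ) * P2.φ (D.v 0)) := by linarith
      rw [h6, Int.natAbs_neg]
    rwa [Int.natAbs_mul, Int.natAbs_mul, Int.natAbs_natCast, Int.natAbs_natCast] at h5
  obtain ⟨c, hc⟩ := theta D h01 hi0 hi1 P1 P2 P3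
  have hF5 : r * q = c.natAbs * h1 := by
    have h7 := congrArg Int.natAbs hc
    rwa [Int.natAbs_mul, Int.natAbs_mul] at h7
  -- positivity
  have hS1ne : D.multSigma 1 ≠ 0 := multSigma_ne_zero D hnne 1
  have hS0ne : D.multSigma 0 ≠ 0 := multSigma_ne_zero D hnne 0
  have hM01ne : D.multMu 0 1 ≠ 0 := by
    intro h; rw [hF1, h, zero_mul] at hS1ne; exact hS1ne rfl
  have hh1ne : h1 ≠ 0 := by
    intro h; rw [hF1, h, mul_zero] at hS1ne; exact hS1ne rfl
  have hMi1ne : D.multMu i 1 ≠ 0 := by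
    intro h; rw [hF2, h, zero_mul] at hS1ne; exact hS1ne rfl
  have hqne : q ≠ 0 := by
    intro h; rw [hF2, h, mul_zero] at hS1ne; exact hS1ne rfl
  have hMi0ne : D.multMu i 0 ≠ 0 := by
    intro h; rw [hF3, h, zero_mul] at hS0ne; exact hS0ne rfl
  have hpne : p ≠ 0 := by
    intro h; rw [hF3, h, mul_zero] at hS0ne; exact hS0ne rfl
  have hS1pos : (0:ℝ) < (D.multSigma 1 : ℝ) := by
    exact_mod_cast Nat.pos_of_ne_zero hS1ne
  have hS0pos : (0:ℝ) < (D.multSigma 0 : ℝ) := by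
    exact_mod_cast Nat.pos_of_ne_zero hS0ne
  have hA0pos : (0:ℝ) < (D.a 0 : ℝ) := by exact_mod_cast D.a_pos 0
  have hAipos : (0:ℝ) < (D.a i : ℝ) := by exact_mod_cast D.a_pos i
  have hqpos : (0:ℝ) < (q : ℝ) := by exact_mod_cast Nat.pos_of_ne_zero hqne
  have hppos : (0:ℝ) < (p : ℝ) := by exact_mod_cast Nat.pos_of_ne_zero hpne
  have h4 : x = (D.a i : ℝ) * ((D.multMu 0 1 : ℝ)/((D.a 0 : ℝ)*(D.multSigma 1 : ℝ))) := by
    rw [hxeq]; ring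
  -- bound via q
  have hxq : x ≤ 1 / (q : ℝ) := by
    have hMi1pos : (0:ℝ) < (D.multMu i 1 : ℝ) := by
      exact_mod_cast Nat.pos_of_ne_zero hMi1ne
    have h2 : (D.multMu i 1 : ℝ) / ((D.a i : ℝ) * (D.multSigma 1 : ℝ))
        = 1 / ((D.a i : ℝ) * (q:ℝ)) := by
      have hne1 : (D.a i : ℝ) ≠ 0 := hAipos.ne'
      have hne2 : (D.multMu i 1 : ℝ) ≠ 0 := hMi1pos.ne'
      have hne3 : (q : ℝ) ≠ 0 := hqpos.ne'
      rw [hF2]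
      push_cast
      field_simp
    have h3 := hNorm i 1 hi1
    rw [h2] at h3
    rw [h4]
    calc (D.a i : ℝ) * ((D.multMu 0 1 : ℝ)/((D.a 0 : ℝ)*(D.multSigma 1 : ℝ)))
        ≤ (D.a i : ℝ) * (1 / ((D.a i : ℝ) * (q:ℝ))) :=
          mul_le_mul_of_nonneg_left h3 hAipos.le
      _ = 1/(q:ℝ) := by field_simp
  -- bound via p
  have hxp : x ≤ 1 / (p : ℝ) := by
    have hMi0pos : (0:ℝ) < (D.multMu i 0 : ℝ) := by
      exact_mod_cast Nat.pos_of_ne_zero hMi0ne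
    have h2 : (D.multMu i 0 : ℝ) / ((D.a i : ℝ) * (D.multSigma 0 : ℝ))
        = 1 / ((D.a i : ℝ) * (p:ℝ)) := by
      have hne1 : (D.a i : ℝ) ≠ 0 := hAipos.ne'
      have hne2 : (D.multMu i 0 : ℝ) ≠ 0 := hMi0pos.ne'
      have hne3 : (p : ℝ) ≠ 0 := hppos.ne'
      rw [hF3]
      push_cast
      field_simp
    have h3 := hNorm i 0 hi0
    rw [h2] at h3
    rw [h4]
    calc (D.a i : ℝ) * ((D.multMu 0 1 : ℝ)/((D.a 0 : ℝ)*(D.multSigma 1 : ℝ)))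
        ≤ (D.a i : ℝ) * (1 / ((D.a i : ℝ) * (p:ℝ))) :=
          mul_le_mul_of_nonneg_left h3 hAipos.le
      _ = 1/(p:ℝ) := by field_simp
  -- q ≤ K and p ≤ K
  have hcast_le : ∀ w : ℕ, (0:ℝ) < (w:ℝ) → ε < 1/(w:ℝ) → w ≤ K := by
    intro w hw hlt
    have h5 : (w:ℝ) < ε⁻¹ := by
      rw [lt_div_iff₀ hw] at hlt
      rw [← one_div]
      rw [lt_div_iff₀ hε]
      linarith [hlt]
    have h6 : ε⁻¹ ≤ (K:ℝ) := Nat.le_ceil _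
    have : (w:ℝ) ≤ (K:ℝ) := (h5.trans_le h6).le
    exact_mod_cast this
  have hqK : q ≤ K := hcast_le q hqpos (lt_of_lt_of_le hxgt hxq)
  have hpK : p ≤ K := hcast_le p hppos (lt_of_lt_of_le hxgt hxp)
  -- x ≤ 1
  have hx1 : x ≤ 1 := by
    refine hxq.trans ?_
    rw [div_le_one hqpos]
    exact_mod_cast Nat.one_le_iff_ne_zero.mpr hqne
  -- key identity
  have hkey : D.multMu 0 1 * (D.a i * (p * q)) = c.natAbs * (D.a 0 * D.multSigma 1) := by
    have e1 : D.multMu 0 1 * (D.a i * (p * q)) = D.multMu 0 1 * q * (D.a i * p) := by ring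
    rw [e1, hF4]
    have e2 : D.multMu 0 1 * q * (D.a 0 * r) = D.a 0 * (D.multMu 0 1 * (r * q)) := by ring
    rw [e2, hF5, hF1]
    ring
  have hpqpos : (0:ℝ) < ((p*q : ℕ) : ℝ) := by
    push_cast
    positivity
  have hxpq : x = (c.natAbs : ℝ) / ((p * q : ℕ) : ℝ) := by
    rw [hxeq, div_eq_div_iff (by positivity) hpqpos.ne']
    have h8 := congrArg (fun t : ℕ => (t : ℝ)) hkey
    push_cast at h8 ⊢
    linarith [h8]
  -- c.natAbs ≤ p * q
  have hcle : c.natAbs ≤ p * q := by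
    have h9 : (c.natAbs : ℝ) ≤ ((p*q : ℕ):ℝ) := by
      rw [hxpq] at hx1
      rw [div_le_one hpqpos] at hx1
      exact hx1
    exact_mod_cast h9
  have hpqK : p * q ≤ K^2 := by
    calc p * q ≤ K * K := Nat.mul_le_mul hpK hqK
    _ = K^2 := by ring
  have hcK : c.natAbs ≤ K^2 := hcle.trans hpqK
  -- membership
  rw [hF]
  simp only [Finset.coe_image, Set.mem_image, Finset.mem_coe, Finset.mem_product]
  refine ⟨(c.natAbs, p * q), ?_, ?_⟩
  · constructor
    · exact Finset.mem_range.mpr (by omega)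
    · exact Finset.mem_range.mpr (by omega)
  · rw [hxpq]

end
end

section
/- Let (v₁, …, v_{n+1}; a₁, …, a_{n+1}) be a toric Fano datum of dimension n such that the vectors v₁, …, v_{n+1} generate ℤⁿ as a group (the weighted projective space case). Then for all k ≠ l, mult(μ_{k,l})/mult(σ_l) = gcd(aₖ, a_l)/a_l. -/
open Finset

noncomputable section

section AuxLemmas


namespace ToricFanoDatum

variable {n : ℕ} (D : ToricFanoDatum n)

lemma castVec_smul (m : ℤ) (w : Fin n → ℤ) : castVec (m • w) = (m : ℝ) • castVec w := by
  funext j; simp [castVec]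

lemma castVec_add (w w' : Fin n → ℤ) : castVec (w + w') = castVec w + castVec w' := by
  funext j; simp [castVec]

lemma castVec_sum {ι : Type*} (s : Finset ι) (f : ι → Fin n → ℤ) :
    castVec (∑ i ∈ s, f i) = ∑ i ∈ s, castVec (f i) :=
  map_sum (castHom n) f s

lemma cast_rel {c : Fin (n + 1) → ℤ} {x : Fin n → ℤ} (h : ∑ i, c i • D.v i = x) :
    ∑ i, (c i : ℝ) • castVec (D.v i) = castVec x := by
  rw [← h, castVec_sum]
  exact Finset.sum_congr rfl fun i _ => (castVec_smul _ _).symm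

lemma sum_av_real : ∑ i, (D.a i : ℝ) • castVec (D.v i) = 0 := by
  have := D.cast_rel D.sum_av
  have h0 : castVec (0 : Fin n → ℤ) = 0 := by funext j; simp [castVec]
  rw [h0] at this
  simpa using this

lemma sum_ext {p : Fin (n + 1) → Prop} [DecidablePred p] {M : Type*} [AddCommMonoid M]
    (F : Fin (n + 1) → M) (h0 : ∀ i, ¬ p i → F i = 0) :
    ∑ i, F i = ∑ i : {i // p i}, F i := by
  rw [← Finset.sum_subtype (Finset.univ.filter p) (by simp) F]
  exact (Finset.sum_subset (Finset.filter_subset _ _)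
    (fun i _ hi => h0 i (by simpa using hi))).symm

lemma two_erase {k l : Fin (n + 1)} (hkl : k ≠ l) {M : Type*} [AddCommGroup M]
    (F : Fin (n + 1) → M) :
    ∑ i, F i = F k + F l + ∑ i : {i // i ≠ k ∧ i ≠ l}, F i := by
  classical
  have h1 : ∑ i, F i = F k + ∑ i ∈ Finset.univ.erase k, F i :=
    (Finset.add_sum_erase _ F (Finset.mem_univ k)).symm
  have hl : l ∈ Finset.univ.erase k := Finset.mem_erase.2 ⟨hkl.symm, Finset.mem_univ l⟩
  have h2 : ∑ i ∈ Finset.univ.erase k, F i = F l + ∑ i ∈ (Finset.univ.erase k).erase l, F i :=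
    (Finset.add_sum_erase _ F hl).symm
  have h3 : ∑ i ∈ (Finset.univ.erase k).erase l, F i = ∑ i : {i // i ≠ k ∧ i ≠ l}, F i := by
    apply Finset.sum_subtype
    intro x
    simp only [Finset.mem_erase, Finset.mem_univ, and_true]
    tauto
  rw [h1, h2, h3, add_assoc]

lemma span_top : Submodule.span ℝ (Set.range fun i => castVec (D.v i)) = ⊤ := by
  rw [eq_top_iff]
  intro x _
  obtain ⟨c, _, rfl⟩ := D.span_cone x
  exact Submodule.sum_mem _ fun i _ =>
    Submodule.smul_mem _ _ (Submodule.subset_span ⟨i, rfl⟩)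

lemma a_real_ne (i : Fin (n + 1)) : (D.a i : ℝ) ≠ 0 := by
  exact_mod_cast (D.a_pos i).ne'

lemma vl_mem_span (l : Fin (n + 1)) :
    castVec (D.v l) ∈ Submodule.span ℝ
      (Set.range fun i : {i // i ≠ l} => castVec (D.v i)) := by
  have h := D.sum_av_real
  rw [← Finset.add_sum_erase _ _ (Finset.mem_univ l)] at h
  have hs : ∑ i ∈ Finset.univ.erase l, (D.a i : ℝ) • castVec (D.v i)
      = ∑ i : {i // i ≠ l}, (D.a i : ℝ) • castVec (D.v i) :=
    Finset.sum_subtype _ (by simp) _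
  have key : castVec (D.v l)
      = (D.a l : ℝ)⁻¹ • (-(∑ i : {i // i ≠ l}, (D.a i : ℝ) • castVec (D.v i))) := by
    rw [← hs]
    have : (D.a l : ℝ) • castVec (D.v l)
        = -(∑ i ∈ Finset.univ.erase l, (D.a i : ℝ) • castVec (D.v i)) := by
      linear_combination (norm := module) h
    rw [← this, inv_smul_smul₀ (D.a_real_ne l)]
  rw [key]
  exact Submodule.smul_mem _ _ (Submodule.neg_mem _ (Submodule.sum_mem _ fun i _ =>
    Submodule.smul_mem _ _ (Submodule.subset_span ⟨i, rfl⟩)))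

lemma span_erase_top (l : Fin (n + 1)) :
    Submodule.span ℝ (Set.range fun i : {i // i ≠ l} => castVec (D.v i)) = ⊤ := by
  rw [eq_top_iff, ← D.span_top, Submodule.span_le]
  rintro _ ⟨i, rfl⟩
  by_cases hi : i = l
  · subst hi; exact D.vl_mem_span i
  · exact Submodule.subset_span ⟨⟨i, hi⟩, rfl⟩

lemma li (l : Fin (n + 1)) :
    LinearIndependent ℝ (fun i : {i // i ≠ l} => castVec (D.v i)) := by
  apply linearIndependent_of_top_le_span_of_card_eq_finrank
  · rw [D.span_erase_top l]
  · simp [Fintype.card_subtype_compl, Module.finrank_fin_fun]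

lemma gcd_cast_int {ι : Type*} (s : Finset ι) (f : ι → ℕ) :
    (s.gcd fun i => ((f i : ℕ) : ℤ)) = ((s.gcd f : ℕ) : ℤ) := by
  classical
  induction s using Finset.induction_on with
  | empty => simp
  | insert _ _ h ih =>
    rw [Finset.gcd_insert, Finset.gcd_insert, ih]
    simp only [← Int.coe_gcd, Int.gcd_natCast_natCast]
    rfl

lemma gcd_a_int : (Finset.univ.gcd fun i => (D.a i : ℤ)) = 1 := by
  rw [gcd_cast_int, D.gcd_a]; rfl

lemma rel_eq (c : Fin (n + 1) → ℤ) (h : ∑ i, c i • D.v i = 0) :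
    ∃ t : ℤ, ∀ i, c i = t * (D.a i : ℤ) := by
  classical
  set d : Fin (n + 1) → ℤ := fun i => (D.a 0 : ℤ) * c i - c 0 * (D.a i : ℤ) with hd_def
  have hd : ∑ i, d i • D.v i = 0 := by
    have : ∑ i, d i • D.v i
        = (D.a 0 : ℤ) • (∑ i, c i • D.v i) - c 0 • (∑ i, (D.a i : ℤ) • D.v i) := by
      rw [Finset.smul_sum, Finset.smul_sum, ← Finset.sum_sub_distrib]
      exact Finset.sum_congr rfl fun i _ => by
        show ((D.a 0 : ℤ) * c i - c 0 * (D.a i : ℤ)) • D.v i = _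
        rw [sub_smul, mul_smul, mul_smul]
    rw [this, h, D.sum_av, smul_zero, smul_zero, sub_zero]
  have hdR : ∑ i, (d i : ℝ) • castVec (D.v i) = 0 := by
    have := D.cast_rel hd
    have h0 : castVec (0 : Fin n → ℤ) = 0 := by funext j; simp [castVec]
    rwa [h0] at this
  have hd0 : d 0 = 0 := by simp [hd_def, mul_comm]
  have hdS : ∑ i : {i // i ≠ (0 : Fin (n + 1))}, (d i : ℝ) • castVec (D.v i) = 0 := by
    rw [← sum_ext (fun i => (d i : ℝ) • castVec (D.v i))
      (fun i hi => by simp only [not_not] at hi; subst hi; simp [hd0])]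
    exact hdR
  have hz : ∀ i : {i // i ≠ (0 : Fin (n + 1))}, ((d i : ℝ) : ℝ) = 0 :=
    Fintype.linearIndependent_iff.mp (D.li 0) _ hdS
  have hdall : ∀ i, d i = 0 := by
    intro i
    by_cases hi : i = 0
    · rw [hi]; exact hd0
    · exact_mod_cast hz ⟨i, hi⟩
  have hmul : ∀ i, (D.a 0 : ℤ) * c i = c 0 * (D.a i : ℤ) := fun i =>
    sub_eq_zero.mp (hdall i)
  have hdvd : (D.a 0 : ℤ) ∣ c 0 := by
    have h1 : (D.a 0 : ℤ) ∣ Finset.univ.gcd (fun i => c 0 * (D.a i : ℤ)) :=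
      Finset.dvd_gcd fun i _ => ⟨c i, (hmul i).symm⟩
    rw [Finset.gcd_mul_left, D.gcd_a_int, mul_one] at h1
    exact dvd_normalize_iff.mp h1
  obtain ⟨t, ht⟩ := hdvd
  refine ⟨t, fun i => ?_⟩
  have ha0 : (D.a 0 : ℤ) ≠ 0 := by exact_mod_cast (D.a_pos 0).ne'
  apply mul_left_cancel₀ ha0
  rw [hmul i, ht]; ring

lemma mem_closure_iff {p : Fin (n + 1) → Prop} [DecidablePred p] (x : Fin n → ℤ) :
    x ∈ AddSubgroup.closure (Set.range fun i : {i // p i} => D.v i) ↔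
      ∃ c : Fin (n + 1) → ℤ, (∀ i, ¬ p i → c i = 0) ∧ ∑ i, c i • D.v i = x := by
  rw [← Submodule.span_int_eq_addSubgroupClosure, Submodule.mem_toAddSubgroup,
    Submodule.mem_span_range_iff_exists_fun]
  constructor
  · rintro ⟨c, hc⟩
    refine ⟨fun i => if h : p i then c ⟨i, h⟩ else 0, fun i hi => dif_neg hi, ?_⟩
    rw [sum_ext (fun i => (if h : p i then c ⟨i, h⟩ else 0) • D.v i)
      (fun i (hi : ¬ p i) => by show (if h : p i then c ⟨i, h⟩ else 0) • D.v i = 0; rw [dif_neg hi, zero_smul])]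
    rw [← hc]
    exact Finset.sum_congr rfl fun i _ => by rw [dif_pos i.2]
  · rintro ⟨c, hc0, rfl⟩
    refine ⟨fun i => c i, ?_⟩
    rw [sum_ext (fun i => c i • D.v i) (fun i (hi : ¬ p i) => by show c i • D.v i = 0; rw [hc0 i hi, zero_smul])]

lemma sigma_set_eq (l : Fin (n + 1)) :
    {w : Fin n → ℤ | ∃ i, i ≠ l ∧ w = D.v i}
      = Set.range fun i : {i : Fin (n + 1) // i ≠ l} => D.v i := by
  ext w
  constructor
  · rintro ⟨i, hi, rfl⟩; exact ⟨⟨i, hi⟩, rfl⟩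
  · rintro ⟨⟨i, hi⟩, rfl⟩; exact ⟨i, hi, rfl⟩

lemma mu_set_eq (k l : Fin (n + 1)) :
    {w : Fin n → ℤ | ∃ i, i ≠ k ∧ i ≠ l ∧ w = D.v i}
      = Set.range fun i : {i : Fin (n + 1) // i ≠ k ∧ i ≠ l} => D.v i := by
  ext w
  constructor
  · rintro ⟨i, hi, hi', rfl⟩; exact ⟨⟨i, hi, hi'⟩, rfl⟩
  · rintro ⟨⟨i, hi, hi'⟩, rfl⟩; exact ⟨i, hi, hi', rfl⟩

lemma mu_set_eq_real (k l : Fin (n + 1)) :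
    {w : Fin n → ℝ | ∃ i, i ≠ k ∧ i ≠ l ∧ w = castVec (D.v i)}
      = Set.range fun i : {i : Fin (n + 1) // i ≠ k ∧ i ≠ l} => castVec (D.v i) := by
  ext w
  constructor
  · rintro ⟨i, hi, hi', rfl⟩; exact ⟨⟨i, hi, hi'⟩, rfl⟩
  · rintro ⟨⟨i, hi, hi'⟩, rfl⟩; exact ⟨i, hi, hi', rfl⟩

/-- Generic index computation for an abelian group whose quotient is generated
by the class of `x` of order `d`. -/
lemma index_eq_of_gen {G : Type*} [AddCommGroup G] (H : AddSubgroup G) (x : G) (d : ℕ)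
    (hgen : ∀ y : G, ∃ t : ℤ, y - t • x ∈ H)
    (hord : ∀ m : ℤ, m • x ∈ H ↔ (d : ℤ) ∣ m) :
    H.index = d := by
  have hxQ : ∀ (z : G), ((z : G ⧸ H) = 0 ↔ z ∈ H) := fun z => QuotientAddGroup.eq_zero_iff z
  have htop : AddSubgroup.zmultiples ((x : G ⧸ H)) = ⊤ := by
    rw [eq_top_iff]
    rintro y -
    induction y using QuotientAddGroup.induction_on with
    | H g =>
      obtain ⟨t, ht⟩ := hgen g
      refine ⟨t, ?_⟩
      have : ((g - t • x : G) : G ⧸ H) = 0 := (hxQ _).2 ht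
      rw [QuotientAddGroup.mk_sub, QuotientAddGroup.mk_zsmul, sub_eq_zero] at this
      exact this.symm
  have hcard : H.index = Nat.card (G ⧸ H) := rfl
  have hcard2 : Nat.card (G ⧸ H) = addOrderOf ((x : G ⧸ H)) := by
    rw [← Nat.card_zmultiples]
    rw [htop]
    exact Nat.card_congr AddSubgroup.topEquiv.toEquiv.symm
  rw [hcard, hcard2]
  apply Nat.dvd_antisymm
  · apply addOrderOf_dvd_of_nsmul_eq_zero
    have : ((d : ℤ) • x : G) ∈ H := (hord _).2 dvd_rfl
    have h0 : (((d : ℤ) • x : G) : G ⧸ H) = 0 := (hxQ _).2 this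
    rw [QuotientAddGroup.mk_zsmul] at h0
    simpa using h0
  · have h1 : (addOrderOf ((x : G ⧸ H)) : ℤ) • x ∈ H := by
      apply (hxQ _).1
      rw [QuotientAddGroup.mk_zsmul]
      simpa using addOrderOf_nsmul_eq_zero ((x : G ⧸ H))
    exact_mod_cast (hord _).1 h1

lemma proj_mem (l : Fin (n + 1)) (c : Fin (n + 1) → ℤ) :
    ∑ i, c i • D.v i - c l • D.v l ∈
      AddSubgroup.closure (Set.range fun i : {i : Fin (n + 1) // i ≠ l} => D.v i) := by
  classical
  rw [D.mem_closure_iff]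
  refine ⟨fun i => if i = l then 0 else c i,
    fun i hi => by simp only [not_not] at hi; simp [hi], ?_⟩
  rw [← Finset.add_sum_erase _ (fun i => (if i = l then 0 else c i) • D.v i) (Finset.mem_univ l),
      ← Finset.add_sum_erase _ (fun i => c i • D.v i) (Finset.mem_univ l)]
  have herase : ∑ i ∈ Finset.univ.erase l, (if i = l then 0 else c i) • D.v i
      = ∑ i ∈ Finset.univ.erase l, c i • D.v i :=
    Finset.sum_congr rfl fun i hi => by rw [if_neg (Finset.ne_of_mem_erase hi)]
  rw [herase, if_pos rfl, zero_smul, zero_add, add_sub_cancel_left]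

lemma multSigma_eq (hgen : AddSubgroup.closure (Set.range D.v) = ⊤) (l : Fin (n + 1)) :
    D.multSigma l = D.a l := by
  classical
  rw [multSigma, D.sigma_set_eq l]
  apply index_eq_of_gen _ (D.v l) (D.a l)
  · intro y
    have hy : y ∈ Submodule.span ℤ (Set.range D.v) := by
      rw [← Submodule.mem_toAddSubgroup, Submodule.span_int_eq_addSubgroupClosure, hgen]
      trivial
    obtain ⟨c, hc⟩ := (Submodule.mem_span_range_iff_exists_fun ℤ).mp hy
    exact ⟨c l, by rw [← hc]; exact D.proj_mem l c⟩
  · intro m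
    constructor
    · intro hm
      rw [D.mem_closure_iff] at hm
      obtain ⟨c, hc0, hc⟩ := hm
      have hcl : c l = 0 := hc0 l (not_not.2 rfl)
      have h2 : ∑ i, (if i = l then m else 0) • D.v i = m • D.v l := by
        simp only [ite_smul, zero_smul]
        rw [Finset.sum_ite_eq' Finset.univ l (fun i => m • D.v i)]
        simp
      have he : ∑ i, (c i - (if i = l then m else 0)) • D.v i = 0 := by
        calc ∑ i, (c i - (if i = l then m else 0)) • D.v i
            = ∑ i, c i • D.v i - ∑ i, (if i = l then m else 0) • D.v i := by
              rw [← Finset.sum_sub_distrib]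
              exact Finset.sum_congr rfl fun i _ => sub_smul _ _ _
          _ = m • D.v l - m • D.v l := by rw [hc, h2]
          _ = 0 := sub_self _
      obtain ⟨t, ht⟩ := D.rel_eq _ he
      have h3 := ht l
      rw [hcl, if_pos rfl, zero_sub] at h3
      exact ⟨-t, by rw [neg_eq_iff_eq_neg.mp h3]; ring⟩
    · rintro ⟨s, rfl⟩
      have hc : ∑ i, (-s * (D.a i : ℤ)) • D.v i = 0 := by
        have h1 : ∑ i, (-s * (D.a i : ℤ)) • D.v i = (-s) • ∑ i, (D.a i : ℤ) • D.v i := by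
          rw [Finset.smul_sum]
          exact Finset.sum_congr rfl fun i _ => mul_smul _ _ _
        rw [h1, D.sum_av, smul_zero]
      have hmem := D.proj_mem l (fun i => -s * (D.a i : ℤ))
      rw [hc, zero_sub] at hmem
      have h2 : -((-s * (D.a l : ℤ)) • D.v l) = ((D.a l : ℤ) * s) • D.v l := by
        rw [← neg_smul]; congr 1; ring
      rwa [h2] at hmem

lemma castVec_neg (w : Fin n → ℤ) : castVec (-w) = -castVec w := by
  funext j; simp [castVec]

lemma castVec_sub (w w' : Fin n → ℤ) : castVec (w - w') = castVec w - castVec w' := by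
  funext j; simp [castVec]

variable {k l : Fin (n + 1)}

lemma hFkl (hkl : k ≠ l) :
    (D.a k : ℤ) • D.v k + (D.a l : ℤ) • D.v l
      = -∑ i : {i // i ≠ k ∧ i ≠ l}, (D.a i : ℤ) • D.v i := by
  have h := two_erase hkl (fun i => (D.a i : ℤ) • D.v i)
  rw [D.sum_av] at h
  rw [eq_neg_iff_add_eq_zero]
  exact h.symm

lemma mem_latticeMu_iff (x : Fin n → ℤ) :
    x ∈ D.latticeMu k l ↔ castVec x ∈
      Submodule.span ℝ (Set.range fun i : {i // i ≠ k ∧ i ≠ l} => castVec (D.v i)) := by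
  rw [latticeMu, D.mu_set_eq_real k l]
  exact Iff.rfl

lemma vk_not_mem_muSpan (hkl : k ≠ l) :
    castVec (D.v k) ∉
      Submodule.span ℝ (Set.range fun i : {i // i ≠ k ∧ i ≠ l} => castVec (D.v i)) := by
  intro hmem
  set f : {i : Fin (n + 1) // i ≠ l} → (Fin n → ℝ) := fun i => castVec (D.v i) with hf
  have hli := D.li l
  have hx : (⟨k, hkl⟩ : {i : Fin (n + 1) // i ≠ l}) ∉
      {j : {i : Fin (n + 1) // i ≠ l} | j ≠ ⟨k, hkl⟩} := by simp
  have hnot := hli.notMem_span_image hx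
  apply hnot
  have hle : Submodule.span ℝ (Set.range fun i : {i // i ≠ k ∧ i ≠ l} => castVec (D.v i))
      ≤ Submodule.span ℝ (f '' {j : {i : Fin (n + 1) // i ≠ l} | j ≠ ⟨k, hkl⟩}) := by
    apply Submodule.span_le.2
    rintro _ ⟨⟨i, hik, hil⟩, rfl⟩
    exact Submodule.subset_span ⟨⟨i, hil⟩, by simpa [Subtype.ext_iff] using hik, rfl⟩
  exact hle hmem

lemma mu_ratio (hkl : k ≠ l) (c : Fin (n + 1) → ℤ)
    (h : castVec (∑ i, c i • D.v i) ∈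
      Submodule.span ℝ (Set.range fun i : {i // i ≠ k ∧ i ≠ l} => castVec (D.v i))) :
    (D.a l : ℤ) * c k = c l * (D.a k : ℤ) := by
  set sp := Submodule.span ℝ (Set.range fun i : {i // i ≠ k ∧ i ≠ l} => castVec (D.v i))
    with hsp
  have hmemgen : ∀ (m : ℤ) (i : {i // i ≠ k ∧ i ≠ l}), castVec (m • D.v i) ∈ sp := by
    intro m i
    rw [castVec_smul]
    exact Submodule.smul_mem _ _ (Submodule.subset_span ⟨i, rfl⟩)
  have h1 : castVec (c k • D.v k + c l • D.v l) ∈ sp := by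
    have hsum := two_erase hkl (fun i => c i • D.v i)
    have : c k • D.v k + c l • D.v l
        = ∑ i, c i • D.v i - ∑ i : {i // i ≠ k ∧ i ≠ l}, c i • D.v i := by
      rw [hsum]; abel
    rw [this, castVec_sub]
    refine Submodule.sub_mem _ h ?_
    rw [castVec_sum]
    exact Submodule.sum_mem _ fun i _ => hmemgen _ i
  have h2 : castVec ((D.a k : ℤ) • D.v k + (D.a l : ℤ) • D.v l) ∈ sp := by
    rw [D.hFkl hkl, castVec_neg, castVec_sum]
    exact Submodule.neg_mem _ (Submodule.sum_mem _ fun i _ => hmemgen _ i)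
  have h3 : castVec (((D.a l : ℤ) * c k - c l * (D.a k : ℤ)) • D.v k) ∈ sp := by
    have hid : ((D.a l : ℤ) * c k - c l * (D.a k : ℤ)) • D.v k
        = (D.a l : ℤ) • (c k • D.v k + c l • D.v l)
          - c l • ((D.a k : ℤ) • D.v k + (D.a l : ℤ) • D.v l) := by
      module
    rw [hid, castVec_sub, castVec_smul, castVec_smul]
    exact Submodule.sub_mem _ (Submodule.smul_mem _ _ h1) (Submodule.smul_mem _ _ h2)
  by_contra hne
  have hne' : (((D.a l : ℤ) * c k - c l * (D.a k : ℤ) : ℤ) : ℝ) ≠ 0 := by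
    exact_mod_cast sub_ne_zero.2 hne
  apply D.vk_not_mem_muSpan hkl
  rw [castVec_smul] at h3
  have := Submodule.smul_mem sp (((D.a l : ℤ) * c k - c l * (D.a k : ℤ) : ℤ) : ℝ)⁻¹ h3
  rwa [inv_smul_smul₀ hne'] at this

lemma multMu_eq (hgen : AddSubgroup.closure (Set.range D.v) = ⊤) (hkl : k ≠ l) :
    D.multMu k l = Nat.gcd (D.a k) (D.a l) := by
  classical
  set g : ℕ := Nat.gcd (D.a k) (D.a l) with hg_def
  have hg : 0 < g := Nat.gcd_pos_of_pos_left _ (D.a_pos k)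
  set p : ℕ := D.a k / g with hp_def
  set q : ℕ := D.a l / g with hq_def
  have hpk : g * p = D.a k := Nat.mul_div_cancel' (Nat.gcd_dvd_left _ _)
  have hql : g * q = D.a l := Nat.mul_div_cancel' (Nat.gcd_dvd_right _ _)
  have hp0 : 0 < p := by
    rcases Nat.eq_zero_or_pos p with h | h
    · exfalso; have h2 := hpk; rw [h, mul_zero] at h2
      have := D.a_pos k; omega
    · exact h
  have hq0 : 0 < q := by
    rcases Nat.eq_zero_or_pos q with h | h
    · exfalso; have := hql; rw [h, mul_zero] at this
      have := D.a_pos l; omega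
    · exact h
  have cop : Nat.Coprime p q := Nat.coprime_div_gcd_div_gcd hg
  set u : Fin n → ℤ := (p : ℤ) • D.v k + (q : ℤ) • D.v l with hu_def
  have hgu : (g : ℤ) • u = (D.a k : ℤ) • D.v k + (D.a l : ℤ) • D.v l := by
    rw [hu_def, smul_add, smul_smul, smul_smul]
    congr 2
    · exact_mod_cast congrArg (fun x : ℕ => (x : ℤ)) hpk
    · exact_mod_cast congrArg (fun x : ℕ => (x : ℤ)) hql
  have hgZ : ((g : ℤ)) ≠ 0 := by exact_mod_cast hg.ne'
  have hpZ : ((p : ℤ)) ≠ 0 := by exact_mod_cast hp0.ne'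
  have hakZ : (D.a k : ℤ) = (g : ℤ) * (p : ℤ) := by exact_mod_cast hpk.symm
  have halZ : (D.a l : ℤ) = (g : ℤ) * (q : ℤ) := by exact_mod_cast hql.symm
  set sp := Submodule.span ℝ (Set.range fun i : {i // i ≠ k ∧ i ≠ l} => castVec (D.v i))
    with hsp
  have hu_mem : u ∈ D.latticeMu k l := by
    rw [D.mem_latticeMu_iff]
    have h2 : castVec ((g : ℤ) • u) ∈ sp := by
      rw [hgu, D.hFkl hkl, castVec_neg, castVec_sum]
      refine Submodule.neg_mem _ (Submodule.sum_mem _ fun i _ => ?_)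
      rw [castVec_smul]
      exact Submodule.smul_mem _ _ (Submodule.subset_span ⟨i, rfl⟩)
    rw [castVec_smul] at h2
    have hgR : (((g : ℤ) : ℝ)) ≠ 0 := by exact_mod_cast hgZ
    have h3 := Submodule.smul_mem sp (((g : ℤ) : ℝ))⁻¹ h2
    rwa [inv_smul_smul₀ hgR] at h3
  rw [multMu, D.mu_set_eq k l]
  show ((AddSubgroup.closure
      (Set.range fun i : {i // i ≠ k ∧ i ≠ l} => D.v i)).addSubgroupOf
        (D.latticeMu k l)).index = g
  apply index_eq_of_gen _ (⟨u, hu_mem⟩ : D.latticeMu k l) g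
  · intro y
    have hy0 : (y : Fin n → ℤ) ∈ Submodule.span ℤ (Set.range D.v) := by
      rw [← Submodule.mem_toAddSubgroup, Submodule.span_int_eq_addSubgroupClosure, hgen]
      trivial
    obtain ⟨c, hc⟩ := (Submodule.mem_span_range_iff_exists_fun ℤ).mp hy0
    have hy : castVec (y : Fin n → ℤ) ∈ sp := (D.mem_latticeMu_iff _).1 y.2
    have hrat := D.mu_ratio hkl c (by rw [hc]; exact hy)
    have hqc : (q : ℤ) * c k = c l * (p : ℤ) := by
      apply mul_left_cancel₀ hgZ
      calc (g : ℤ) * ((q : ℤ) * c k) = (D.a l : ℤ) * c k := by rw [halZ]; ring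
        _ = c l * (D.a k : ℤ) := hrat
        _ = (g : ℤ) * (c l * (p : ℤ)) := by rw [hakZ]; ring
    have hpq : IsCoprime ((p : ℤ)) ((q : ℤ)) := Nat.isCoprime_iff_coprime.mpr cop
    have hpdvd : (p : ℤ) ∣ c k :=
      hpq.dvd_of_dvd_mul_left ⟨c l, by linear_combination hqc⟩
    obtain ⟨t, ht⟩ := hpdvd
    have hcl : c l = (q : ℤ) * t := by
      apply mul_left_cancel₀ hpZ
      calc (p : ℤ) * c l = (q : ℤ) * c k := by linear_combination -hqc
        _ = (p : ℤ) * ((q : ℤ) * t) := by rw [ht]; ring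
    refine ⟨t, ?_⟩
    rw [AddSubgroup.mem_addSubgroupOf]
    have hcoe : ((y - t • (⟨u, hu_mem⟩ : D.latticeMu k l) : D.latticeMu k l) : Fin n → ℤ)
        = (y : Fin n → ℤ) - t • u := by simp
    have hklu : c k • D.v k + c l • D.v l = t • u := by
      rw [hu_def, smul_add, smul_smul, smul_smul, ht, hcl,
        mul_comm ((p : ℤ)) t, mul_comm ((q : ℤ)) t]
    have hrepr : (y : Fin n → ℤ) - t • u = ∑ i : {i // i ≠ k ∧ i ≠ l}, c i • D.v i := by
      rw [← hc, two_erase hkl (fun i => c i • D.v i), hklu]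
      abel
    rw [hcoe, hrepr]
    exact AddSubgroup.sum_mem _ fun i _ =>
      AddSubgroup.zsmul_mem _ (AddSubgroup.subset_closure (Set.mem_range_self i)) _
  · intro m
    rw [AddSubgroup.mem_addSubgroupOf]
    have hcoe : ((m • (⟨u, hu_mem⟩ : D.latticeMu k l) : D.latticeMu k l) : Fin n → ℤ)
        = m • u := by simp
    rw [hcoe]
    constructor
    · intro hm
      rw [D.mem_closure_iff] at hm
      obtain ⟨c, hc0, hc⟩ := hm
      have hck : c k = 0 := hc0 k (by simp)
      have hcorr : ∑ i, (if i = k then m * (p : ℤ) else if i = l then m * (q : ℤ) else 0)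
          • D.v i = m • u := by
        rw [two_erase hkl
          (fun i => (if i = k then m * (p : ℤ) else if i = l then m * (q : ℤ) else 0) • D.v i)]
        have hz : ∑ i : {i // i ≠ k ∧ i ≠ l},
            (if (i : Fin (n + 1)) = k then m * (p : ℤ)
              else if (i : Fin (n + 1)) = l then m * (q : ℤ) else 0) • D.v i = 0 := by
          apply Finset.sum_eq_zero
          intro i _
          rw [if_neg i.2.1, if_neg i.2.2, zero_smul]
        rw [hz, add_zero, if_pos rfl, if_neg (Ne.symm hkl), if_pos rfl,
          hu_def, smul_add, smul_smul, smul_smul]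
      have he : ∑ i, (c i - (if i = k then m * (p : ℤ) else if i = l then m * (q : ℤ) else 0))
          • D.v i = 0 := by
        calc ∑ i, (c i - (if i = k then m * (p : ℤ) else if i = l then m * (q : ℤ) else 0))
              • D.v i
            = ∑ i, c i • D.v i
              - ∑ i, (if i = k then m * (p : ℤ) else if i = l then m * (q : ℤ) else 0)
                • D.v i := by
              rw [← Finset.sum_sub_distrib]
              exact Finset.sum_congr rfl fun i _ => sub_smul _ _ _
          _ = m • u - m • u := by rw [hc, hcorr]
          _ = 0 := sub_self _
      obtain ⟨t, ht⟩ := D.rel_eq _ he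
      have h3 := ht k
      rw [hck, if_pos rfl, zero_sub] at h3
      refine ⟨-t, ?_⟩
      apply mul_right_cancel₀ hpZ
      rw [hakZ] at h3
      linear_combination -h3
    · rintro ⟨s, rfl⟩
      have hrepr : ((g : ℤ) * s) • u
          = ∑ i : {i // i ≠ k ∧ i ≠ l}, (-(s * (D.a i : ℤ))) • D.v i := by
        calc ((g : ℤ) * s) • u = s • ((g : ℤ) • u) := by rw [smul_smul, mul_comm]
          _ = s • (-∑ i : {i // i ≠ k ∧ i ≠ l}, (D.a i : ℤ) • D.v i) := by
              rw [hgu, D.hFkl hkl]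
          _ = -∑ i : {i // i ≠ k ∧ i ≠ l}, s • ((D.a i : ℤ) • D.v i) := by
              rw [smul_neg, Finset.smul_sum]
          _ = ∑ i : {i // i ≠ k ∧ i ≠ l}, (-(s * (D.a i : ℤ))) • D.v i := by
              rw [← Finset.sum_neg_distrib]
              exact Finset.sum_congr rfl fun i _ => by rw [smul_smul, ← neg_smul]
      rw [hrepr]
      exact AddSubgroup.sum_mem _ fun i _ =>
        AddSubgroup.zsmul_mem _ (AddSubgroup.subset_closure (Set.mem_range_self i)) _


end ToricFanoDatum

end AuxLemmas

/-- If the vectors of a toric Fano datum generate `ℤⁿ` as a group (the weighted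
projective space case `ℙ(a₁, …, a_{n+1})`), then for all `k ≠ l`,
`mult(μ_{k,l})/mult(σ_l) = gcd(aₖ, a_l)/a_l`. -/
theorem multMu_div_multSigma_of_gen (n : ℕ) (D : ToricFanoDatum n)
    (hgen : AddSubgroup.closure (Set.range D.v) = ⊤) :
    ∀ k l : Fin (n + 1), k ≠ l →
      (D.multMu k l : ℝ) / (D.multSigma l : ℝ) =
        (Nat.gcd (D.a k) (D.a l) : ℝ) / (D.a l : ℝ) := by
  intro k l hkl
  rw [D.multMu_eq hgen hkl, D.multSigma_eq hgen l]

end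
end

section
/- For every integer k ≥ 2, the rational number 2/(k−1) belongs to 𝓛₂^toric (it is the minimal length of the extremal ray of the weighted projective plane ℙ(1, k−1, k)). Consequently 𝓛₂^toric contains a strictly decreasing sequence converging to 0, so 𝓛₂^toric does not satisfy the descending chain condition. -/
open Finset

noncomputable section

lemma gcd_univ_fin2 (f : Fin 2 → ℕ) : Finset.univ.gcd f = Nat.gcd (f 0) (f 1) := by
  rw [show (Finset.univ : Finset (Fin 2)) = {0, 1} from rfl, Finset.gcd_insert,
    Finset.gcd_singleton]
  simp only [normalize_eq]; rfl

lemma span_int (w u : Fin 2 → ℤ) (hw : Nat.gcd (w 0).natAbs (w 1).natAbs = 1)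
    (h : castVec u ∈ Submodule.span ℝ {castVec w}) : ∃ c : ℤ, u = c • w := by
  rw [Submodule.mem_span_singleton] at h
  obtain ⟨t, ht⟩ := h
  have h0 : (u 0 : ℝ) = t * w 0 := by
    rw [show ((u 0 : ℝ)) = castVec u 0 from rfl, ← ht]; simp [castVec]
  have h1 : (u 1 : ℝ) = t * w 1 := by
    rw [show ((u 1 : ℝ)) = castVec u 1 from rfl, ← ht]; simp [castVec]
  have cross : u 0 * w 1 = u 1 * w 0 := by
    have : ((u 0 * w 1 : ℤ) : ℝ) = ((u 1 * w 0 : ℤ) : ℝ) := by push_cast; rw [h0, h1]; ring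
    exact_mod_cast this
  have hco : IsCoprime (w 0) (w 1) := by
    rw [Int.isCoprime_iff_gcd_eq_one]; exact hw
  obtain ⟨x, y, hxy⟩ := hco
  refine ⟨x * u 0 + y * u 1, ?_⟩
  funext j
  fin_cases j
  · show u 0 = (x * u 0 + y * u 1) * w 0
    linear_combination u 0 * hxy.symm + y * cross
  · show u 1 = (x * u 0 + y * u 1) * w 1
    linear_combination u 1 * hxy.symm - x * cross
lemma multMu_eq_one (D : ToricFanoDatum 2) (k l : Fin 3) (hkl : k ≠ l) : D.multMu k l = 1 := by
  obtain ⟨m, hmk, hml, hm⟩ : ∃ m : Fin 3, m ≠ k ∧ m ≠ l ∧ ∀ i : Fin 3, i ≠ k → i ≠ l → i = m := by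
    revert hkl; revert k l; decide
  rw [ToricFanoDatum.multMu, AddSubgroup.relIndex_eq_one]
  intro u hu
  have hset : {w : Fin 2 → ℝ | ∃ i, i ≠ k ∧ i ≠ l ∧ w = castVec (D.v i)} =
      {castVec (D.v m)} := by
    ext w
    constructor
    · rintro ⟨i, h1, h2, rfl⟩; rw [hm i h1 h2]; rfl
    · rintro rfl; exact ⟨m, hmk, hml, rfl⟩
  rw [ToricFanoDatum.latticeMu] at hu
  rw [AddSubgroup.mem_comap] at hu
  rw [hset] at hu
  obtain ⟨c, rfl⟩ := span_int (D.v m) u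
    (by have := D.primitive m; rwa [gcd_univ_fin2] at this) hu
  exact AddSubgroup.zsmul_mem _ (AddSubgroup.subset_closure (show D.v m ∈ {w | ∃ i, i ≠ k ∧ i ≠ l ∧ w = D.v i} from ⟨m, hmk, hml, rfl⟩)) c
/-- The weighted projective plane `ℙ(1, k-1, k)` as a toric Fano datum. -/
def Pdat (k : ℕ) (hk : 2 ≤ k) : ToricFanoDatum 2 where
  v := ![![1 - (k : ℤ), -(k : ℤ)], ![1, 0], ![0, 1]]
  a := ![1, k - 1, k]
  a_pos := by
    intro i; fin_cases i <;> simp <;> omega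
  primitive := by
    intro i
    fin_cases i <;> rw [gcd_univ_fin2] <;> simp
    obtain ⟨m, rfl⟩ : ∃ m, k = 1 + m := ⟨k - 1, by omega⟩
    simpa [Nat.add_sub_cancel_left, Nat.gcd_comm] using Nat.gcd_add_self_left 1 m
  span_cone := by
    intro x
    set t : ℝ := max 0 (max (-(x 0)) (-(x 1))) with ht
    have ht0 : 0 ≤ t := le_max_left _ _
    have ht1 : -(x 0) ≤ t := le_trans (le_max_left _ _) (le_max_right _ _)
    have ht2 : -(x 1) ≤ t := le_trans (le_max_right _ _) (le_max_right _ _)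
    have hk2 : (2 : ℝ) ≤ (k : ℝ) := by exact_mod_cast hk
    refine ⟨![t, x 0 + ((k : ℝ) - 1) * t, x 1 + (k : ℝ) * t], ?_, ?_⟩
    · intro i
      fin_cases i <;> simp <;> nlinarith
    · funext j
      fin_cases j <;>
        simp [Fin.sum_univ_three, castVec, Matrix.cons_val_zero, Matrix.cons_val_one] <;> ring
  gcd_a := by
    rw [show (Finset.univ : Finset (Fin 3)) = {0, 1, 2} from rfl]
    simp
  sum_av := by
    funext j
    have h1 : ((k - 1 : ℕ) : ℤ) = (k : ℤ) - 1 := by omega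
    fin_cases j <;>
      simp [Fin.sum_univ_three, h1] <;> ring
/-- Evaluation at a coordinate, as an `AddMonoidHom`. -/
def evalH (j : Fin 2) : (Fin 2 → ℤ) →+ ℤ := Pi.evalAddMonoidHom (fun _ => ℤ) j

lemma evalH_surj (j : Fin 2) : Function.Surjective (evalH j) := fun z => ⟨fun _ => z, rfl⟩

lemma index_of_eq_comap {S : Set (Fin 2 → ℤ)} {d : ℤ} {j : Fin 2}
    (h : AddSubgroup.closure S = AddSubgroup.comap (evalH j) (AddSubgroup.zmultiples d)) :
    (AddSubgroup.closure S).index = d.natAbs := by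
  rw [h, AddSubgroup.index_comap_of_surjective _ (evalH_surj j), Int.index_zmultiples]

section Sigma

variable (k : ℕ) (hk : 2 ≤ k)

lemma Pdat_sigma0 : (Pdat k hk).multSigma 0 = 1 := by
  rw [ToricFanoDatum.multSigma]
  have : AddSubgroup.closure {w | ∃ i, i ≠ (0 : Fin 3) ∧ w = (Pdat k hk).v i} = ⊤ := by
    rw [eq_top_iff]
    intro w _
    have hw : w = w 0 • (Pdat k hk).v 1 + w 1 • (Pdat k hk).v 2 := by
      funext j; fin_cases j <;> simp [Pdat]
    rw [hw]
    refine AddSubgroup.add_mem _ (AddSubgroup.zsmul_mem _ (AddSubgroup.subset_closure ?_) _)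
      (AddSubgroup.zsmul_mem _ (AddSubgroup.subset_closure ?_) _)
    · exact ⟨1, by decide, rfl⟩
    · exact ⟨2, by decide, rfl⟩
  rw [this, AddSubgroup.index_top]

lemma Pdat_sigma1 : (Pdat k hk).multSigma 1 = k - 1 := by
  rw [ToricFanoDatum.multSigma]
  have h := index_of_eq_comap (S := {w | ∃ i, i ≠ (1 : Fin 3) ∧ w = (Pdat k hk).v i})
    (d := (k : ℤ) - 1) (j := 0) ?_
  · rw [h]; omega
  apply le_antisymm
  · rw [AddSubgroup.closure_le]
    rintro w ⟨i, hi, rfl⟩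
    rw [SetLike.mem_coe, AddSubgroup.mem_comap, AddSubgroup.mem_zmultiples_iff]
    fin_cases i
    · refine ⟨-1, ?_⟩
      show (-1 : ℤ) • ((k : ℤ) - 1) = evalH 0 ((Pdat k hk).v 0)
      simp only [evalH, Pi.evalAddMonoidHom_apply, smul_eq_mul]
      simp [Pdat]
    · exact absurd rfl hi
    · refine ⟨0, ?_⟩
      show (0 : ℤ) • ((k : ℤ) - 1) = evalH 0 ((Pdat k hk).v 2)
      simp only [evalH, Pi.evalAddMonoidHom_apply, smul_eq_mul]
      simp [Pdat]
  · intro w hw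
    rw [AddSubgroup.mem_comap, AddSubgroup.mem_zmultiples_iff] at hw
    obtain ⟨m, hm⟩ := hw
    have hw0 : m * ((k : ℤ) - 1) = w 0 := by
      simpa only [evalH, Pi.evalAddMonoidHom_apply, smul_eq_mul] using hm
    have hweq : w = (-m) • (Pdat k hk).v 0 + (w 1 - m * (k : ℤ)) • (Pdat k hk).v 2 := by
      funext j; fin_cases j <;> simp [Pdat, ← hw0] <;> ring
    rw [hweq]
    refine AddSubgroup.add_mem _ (AddSubgroup.zsmul_mem _ (AddSubgroup.subset_closure ?_) _)
      (AddSubgroup.zsmul_mem _ (AddSubgroup.subset_closure ?_) _)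
    · exact ⟨0, by decide, rfl⟩
    · exact ⟨2, by decide, rfl⟩

lemma Pdat_sigma2 : (Pdat k hk).multSigma 2 = k := by
  rw [ToricFanoDatum.multSigma]
  have h := index_of_eq_comap (S := {w | ∃ i, i ≠ (2 : Fin 3) ∧ w = (Pdat k hk).v i})
    (d := (k : ℤ)) (j := 1) ?_
  · rw [h]; omega
  apply le_antisymm
  · rw [AddSubgroup.closure_le]
    rintro w ⟨i, hi, rfl⟩
    rw [SetLike.mem_coe, AddSubgroup.mem_comap, AddSubgroup.mem_zmultiples_iff]
    fin_cases i
    · refine ⟨-1, ?_⟩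
      show (-1 : ℤ) • (k : ℤ) = evalH 1 ((Pdat k hk).v 0)
      simp only [evalH, Pi.evalAddMonoidHom_apply, smul_eq_mul]
      simp [Pdat]
    · refine ⟨0, ?_⟩
      show (0 : ℤ) • (k : ℤ) = evalH 1 ((Pdat k hk).v 1)
      simp only [evalH, Pi.evalAddMonoidHom_apply, smul_eq_mul]
      simp [Pdat]
    · exact absurd rfl hi
  · intro w hw
    rw [AddSubgroup.mem_comap, AddSubgroup.mem_zmultiples_iff] at hw
    obtain ⟨m, hm⟩ := hw
    have hw1 : m * (k : ℤ) = w 1 := by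
      simpa only [evalH, Pi.evalAddMonoidHom_apply, smul_eq_mul] using hm
    have hweq : w = (-m) • (Pdat k hk).v 0 + (w 0 - m * ((k : ℤ) - 1)) • (Pdat k hk).v 1 := by
      funext j; fin_cases j <;> simp [Pdat, ← hw1] <;> ring
    rw [hweq]
    refine AddSubgroup.add_mem _ (AddSubgroup.zsmul_mem _ (AddSubgroup.subset_closure ?_) _)
      (AddSubgroup.zsmul_mem _ (AddSubgroup.subset_closure ?_) _)
    · exact ⟨0, by decide, rfl⟩
    · exact ⟨1, by decide, rfl⟩

end Sigma
set_option maxHeartbeats 1000000 in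
lemma Pdat_minLength (k : ℕ) (hk : 2 ≤ k) :
    (Pdat k hk).minLength = 2 / ((k : ℝ) - 1) := by
  have hkR : (2 : ℝ) ≤ (k : ℝ) := by exact_mod_cast hk
  have ha0 : ((Pdat k hk).a 0 : ℝ) = 1 := by simp [Pdat]
  have ha1 : ((Pdat k hk).a 1 : ℝ) = (k : ℝ) - 1 := by
    simp only [Pdat, Matrix.cons_val_one, Matrix.head_cons, Matrix.cons_val_zero]
    rw [Nat.cast_sub (by omega)]
    simp
  have ha2 : ((Pdat k hk).a 2 : ℝ) = (k : ℝ) := by simp [Pdat]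
  have hs0 : ((Pdat k hk).multSigma 0 : ℝ) = 1 := by rw [Pdat_sigma0]; simp
  have hs1 : ((Pdat k hk).multSigma 1 : ℝ) = (k : ℝ) - 1 := by
    rw [Pdat_sigma1, Nat.cast_sub (by omega)]; simp
  have hs2 : ((Pdat k hk).multSigma 2 : ℝ) = (k : ℝ) := by rw [Pdat_sigma2]
  have hinf : sInf {x : ℝ | ∃ p q : Fin (2 + 1), p ≠ q ∧
      x = ((Pdat k hk).multMu p q : ℝ) / (((Pdat k hk).a q : ℝ) * ((Pdat k hk).multSigma p : ℝ))}
      = 1 / ((k : ℝ) * ((k : ℝ) - 1)) := by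
    apply IsLeast.csInf_eq
    constructor
    · refine ⟨1, 2, by decide, ?_⟩
      rw [multMu_eq_one _ _ _ (by decide), ha2, hs1]
      push_cast
      ring
    · rintro x ⟨p, q, hpq, rfl⟩
      rw [multMu_eq_one _ _ _ hpq]
      have hcases : ∀ p q : Fin 3, p ≠ q →
          (p = 0 ∧ q = 1) ∨ (p = 0 ∧ q = 2) ∨ (p = 1 ∧ q = 0) ∨ (p = 1 ∧ q = 2) ∨
          (p = 2 ∧ q = 0) ∨ (p = 2 ∧ q = 1) := by decide
      rcases hcases p q hpq with ⟨rfl, rfl⟩|⟨rfl, rfl⟩|⟨rfl, rfl⟩|⟨rfl, rfl⟩|⟨rfl, rfl⟩|⟨rfl, rfl⟩ <;>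
        (simp only [ha0, ha1, ha2, hs0, hs1, hs2, Nat.cast_one]
         rw [div_le_div_iff₀ (by nlinarith) (by nlinarith)]
         try nlinarith)
  rw [ToricFanoDatum.minLength, hinf, Fin.sum_univ_three, ha0, ha1, ha2]
  have h1 : (k : ℝ) - 1 ≠ 0 := by nlinarith
  have h2 : (k : ℝ) ≠ 0 := by nlinarith
  field_simp
  ring

/-- For every integer `k ≥ 2`, the number `2/(k-1)` lies in `𝓛₂^toric` (it is the
minimal length of the extremal ray of `ℙ(1, k-1, k)`); consequently `𝓛₂^toric`
contains a strictly decreasing sequence converging to `0`, and hence does not satisfy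
the descending chain condition. -/
theorem Ltoric_two_not_DCC :
    (∀ k : ℕ, 2 ≤ k → (2 / ((k : ℝ) - 1)) ∈ LtoricSet 2) ∧
    (∃ f : ℕ → ℝ, (∀ m, f m ∈ LtoricSet 2) ∧ StrictAnti f ∧
      Filter.Tendsto f Filter.atTop (nhds 0)) ∧
    ¬ SatisfiesDCC (LtoricSet 2) := by
  have main : ∀ k : ℕ, 2 ≤ k → (2 / ((k : ℝ) - 1)) ∈ LtoricSet 2 := by
    intro k hk
    exact ⟨Pdat k hk, (Pdat_minLength k hk).symm⟩
  have hseq : ∃ f : ℕ → ℝ, (∀ m, f m ∈ LtoricSet 2) ∧ StrictAnti f ∧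
      Filter.Tendsto f Filter.atTop (nhds 0) := by
    refine ⟨fun m => 2 / ((m : ℝ) + 1), ?_, ?_, ?_⟩
    · intro m
      have h := main (m + 2) (by omega)
      have : ((m + 2 : ℕ) : ℝ) - 1 = (m : ℝ) + 1 := by push_cast; ring
      rwa [this] at h
    · intro a b hab
      have hab' : (a : ℝ) + 1 < (b : ℝ) + 1 := by
        have : (a : ℝ) < b := by exact_mod_cast hab
        linarith
      exact div_lt_div_of_pos_left (by norm_num) (by positivity) hab'
    · have h := tendsto_one_div_add_atTop_nhds_zero_nat.const_mul (2 : ℝ)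
      simp only [mul_zero] at h
      simpa [div_eq_mul_inv] using h
  refine ⟨main, hseq, ?_⟩
  intro hdcc
  obtain ⟨f, hmem, hanti, -⟩ := hseq
  obtain ⟨N, hN⟩ := hdcc f hmem hanti.antitone
  have h1 : f (N + 1) < f N := hanti (by omega)
  have h2 : f (N + 1) = f N := hN (N + 1) (by omega)
  linarith

end
end

section
/- Let w₁, …, wₙ ∈ ℤⁿ be linearly independent vectors. Then the index [ℤⁿ ∩ span_ℝ{w₁, …, w_{n−1}} : ℤw₁ + ⋯ + ℤw_{n−1}] divides the index [ℤⁿ : ℤw₁ + ⋯ + ℤwₙ]; in particular the multiplicity of a facet of a simplicial cone divides the multiplicity of the cone. Consequently, for a toric Fano datum the ratios mult(μ_{1,2})/mult(σ₁) and mult(μ_{1,2})/mult(σ₂) are reciprocals of positive integers. -/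
open Finset

noncomputable section

section AuxFacet

open Matrix

lemma aux_det_ne_zero {K : ℕ} {w : Fin K → Fin K → ℤ} (hw : LinearIndependent ℤ w) :
    (Matrix.of w).det ≠ 0 := by
  intro h0
  obtain ⟨g, hg, hgw⟩ := Matrix.exists_vecMul_eq_zero_iff.mpr h0
  apply hg
  funext i
  refine Fintype.linearIndependent_iff.mp hw g ?_ i
  funext j
  simpa [Matrix.vecMul, dotProduct, Finset.sum_apply] using congrFun hgw j

lemma aux_li_real {K : ℕ} {w : Fin K → Fin K → ℤ} (hd : (Matrix.of w).det ≠ 0) :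
    LinearIndependent ℝ (fun i => castVec (w i)) := by
  rw [Fintype.linearIndependent_iff]
  intro g hg i
  by_contra hgi
  have hdet : ((Int.castRingHom ℝ).mapMatrix (Matrix.of w)).det = 0 := by
    rw [← Matrix.exists_vecMul_eq_zero_iff]
    refine ⟨g, fun h => hgi (congrFun h i), ?_⟩
    funext j
    simpa [Matrix.vecMul, dotProduct, Finset.sum_apply, castVec] using congrFun hg j
  rw [← RingHom.map_det] at hdet
  rw [eq_intCast (Int.castRingHom ℝ)] at hdet
  exact hd (by exact_mod_cast hdet)

lemma aux_det_smul_mem {K : ℕ} (w : Fin K → Fin K → ℤ) (x : Fin K → ℤ) :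
    (Matrix.of w).det • x ∈ Submodule.span ℤ (Set.range w) := by
  have h : (x ᵥ* (Matrix.of w).adjugate) ᵥ* (Matrix.of w) = (Matrix.of w).det • x := by
    rw [Matrix.vecMul_vecMul, Matrix.adjugate_mul, ]
    funext j
    simp [Matrix.vecMul, dotProduct, Matrix.one_apply, mul_comm, Finset.sum_ite_eq']
  rw [← h]
  have h2 : (x ᵥ* (Matrix.of w).adjugate) ᵥ* (Matrix.of w)
      = ∑ i, (x ᵥ* (Matrix.of w).adjugate) i • w i := by
    funext j
    simp [Matrix.vecMul, dotProduct, Finset.sum_apply]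
  rw [h2]
  exact Submodule.sum_mem _ fun i _ => Submodule.smul_mem _ _ (Submodule.subset_span ⟨i, rfl⟩)

lemma aux_li_int {k l : ℕ} {w : Fin k → Fin l → ℤ}
    (h : LinearIndependent ℝ (fun i => castVec (w i))) : LinearIndependent ℤ w := by
  rw [Fintype.linearIndependent_iff] at h ⊢
  intro g hg i
  have h2 := congrArg (castHom l) hg
  rw [map_sum, map_zero] at h2
  have h3 : ∑ j, (g j : ℝ) • castVec (w j) = 0 := by
    simp only [map_zsmul, Int.cast_smul_eq_zsmul] at h2 ⊢; exact h2
  exact_mod_cast h (fun j => (g j : ℝ)) h3 i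

lemma aux_core {N : ℕ} (w : Fin (N + 1) → Fin (N + 1) → ℤ) (hw : LinearIndependent ℤ w) :
    (AddSubgroup.closure (Set.range fun i : Fin N => w i.castSucc)).relIndex
        (AddSubgroup.comap (castHom (N + 1))
          (Submodule.span ℝ
            (Set.range fun i : Fin N => castVec (w i.castSucc))).toAddSubgroup) ∣
      (AddSubgroup.closure (Set.range w)).index ∧
      (AddSubgroup.closure (Set.range w)).index ≠ 0 := by
  classical
  set A := AddSubgroup.closure (Set.range w) with hA
  set B := AddSubgroup.closure (Set.range fun i : Fin N => w i.castSucc) with hB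
  set S := Submodule.span ℝ (Set.range fun i : Fin N => castVec (w i.castSucc)) with hS
  set L := AddSubgroup.comap (castHom (N + 1)) S.toAddSubgroup with hL
  have hd : (Matrix.of w).det ≠ 0 := aux_det_ne_zero hw
  have hLIR : LinearIndependent ℝ (fun i => castVec (w i)) := aux_li_real hd
  have hA_span : (Submodule.span ℤ (Set.range w)).toAddSubgroup = A :=
    Submodule.span_int_eq_addSubgroupClosure _
  have hB_span : (Submodule.span ℤ (Set.range fun i : Fin N => w i.castSucc)).toAddSubgroup = B :=
    Submodule.span_int_eq_addSubgroupClosure _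
  -- index ≠ zero
  have htor : ∀ x : Fin (N + 1) → ℤ, (Matrix.of w).det • x ∈ A := fun x => by
    rw [← hA_span]; exact aux_det_smul_mem w x
  haveI : AddGroup.FG (Fin (N + 1) → ℤ) := Module.Finite.iff_addGroup_fg.mp inferInstance
  haveI : Finite ((Fin (N + 1) → ℤ) ⧸ A) := by
    apply AddCommGroup.finite_of_fg_torsion
    intro g
    induction g using QuotientAddGroup.induction_on with
    | H x =>
      rw [isOfFinAddOrder_iff_nsmul_eq_zero]
      refine ⟨(Matrix.of w).det.natAbs, Int.natAbs_pos.mpr hd, ?_⟩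
      have h1 : ((Matrix.of w).det.natAbs : ℤ) • x ∈ A := by
        rw [← Int.abs_eq_natAbs]
        rcases abs_choice (Matrix.of w).det with h | h <;> rw [h]
        · exact htor x
        · exact (neg_smul (Matrix.of w).det x) ▸ neg_mem (htor x)
      rw [natCast_zsmul] at h1
      have : ((Matrix.of w).det.natAbs) • ((QuotientAddGroup.mk' A) x) = 0 := by
        rw [← map_nsmul, QuotientAddGroup.mk'_apply, QuotientAddGroup.eq_zero_iff]
        exact h1
      exact this
  have hAind : A.index ≠ 0 := AddSubgroup.index_ne_zero_of_finite
  -- B = A ⊓ L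
  have hBA : B ≤ A := AddSubgroup.closure_mono (by rintro _ ⟨i, rfl⟩; exact ⟨i.castSucc, rfl⟩)
  have hBL : B ≤ L := by
    rw [hB, AddSubgroup.closure_le]
    rintro _ ⟨i, rfl⟩
    exact AddSubgroup.mem_comap.mpr ((Submodule.mem_toAddSubgroup _).mpr
      (Submodule.subset_span ⟨i, rfl⟩))
  have hinf : A ⊓ L = B := by
    refine le_antisymm ?_ (le_inf hBA hBL)
    intro x hx
    rw [AddSubgroup.mem_inf] at hx
    obtain ⟨hxA, hxL⟩ := hx
    rw [← hA_span, Submodule.mem_toAddSubgroup] at hxA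
    obtain ⟨c, hc⟩ := (Submodule.mem_span_range_iff_exists_fun ℤ).1 hxA
    have hxL' : castVec x ∈ S := hxL
    have hcast : ∑ i, (c i : ℝ) • castVec (w i) = castVec x := by
      have h2 := congrArg (castHom (N + 1)) hc
      rw [map_sum] at h2
      simp only [map_zsmul, Int.cast_smul_eq_zsmul] at h2 ⊢; exact h2
    have hrange : Set.range (fun i : Fin N => castVec (w i.castSucc))
        = (fun i => castVec (w i)) '' Set.range (Fin.castSucc : Fin N → Fin (N + 1)) := by
      rw [← Set.range_comp]; rfl
    have hlast : c (Fin.last N) = 0 := by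
      by_contra hne
      have hsmul : (c (Fin.last N) : ℝ) • castVec (w (Fin.last N)) ∈ S := by
        have hsum1 : ∑ i : Fin N, (c i.castSucc : ℝ) • castVec (w i.castSucc) ∈ S :=
          Submodule.sum_mem _ fun i _ => Submodule.smul_mem _ _
            (Submodule.subset_span ⟨i, rfl⟩)
        have : castVec x = (∑ i : Fin N, (c i.castSucc : ℝ) • castVec (w i.castSucc))
            + (c (Fin.last N) : ℝ) • castVec (w (Fin.last N)) := by
          rw [← hcast, Fin.sum_univ_castSucc]
        have h4 : (c (Fin.last N) : ℝ) • castVec (w (Fin.last N))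
            = castVec x - ∑ i : Fin N, (c i.castSucc : ℝ) • castVec (w i.castSucc) := by
          rw [this]; ring
        rw [h4]
        exact Submodule.sub_mem _ hxL' hsum1
      have hcne : (c (Fin.last N) : ℝ) ≠ 0 := by exact_mod_cast hne
      have hmem : castVec (w (Fin.last N)) ∈ S := by
        have := Submodule.smul_mem S (c (Fin.last N) : ℝ)⁻¹ hsmul
        rwa [inv_smul_smul₀ hcne] at this
      have hni : Fin.last N ∉ Set.range (Fin.castSucc : Fin N → Fin (N + 1)) := by
        rintro ⟨i, hi⟩; exact absurd hi (Fin.castSucc_lt_last i).ne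
      exact hLIR.notMem_span_image hni (by rwa [← hrange])
    have hx : x = ∑ i : Fin N, c i.castSucc • w i.castSucc := by
      rw [← hc, Fin.sum_univ_castSucc, hlast, zero_smul, add_zero]
    rw [← hB_span, Submodule.mem_toAddSubgroup, hx]
    exact Submodule.sum_mem _ fun i _ => Submodule.smul_mem _ _
      (Submodule.subset_span ⟨i, rfl⟩)
  have hrel : B.relIndex L = A.relIndex L := by
    rw [← hinf, AddSubgroup.inf_relIndex_right]
  refine ⟨?_, hAind⟩
  rw [hrel]
  exact AddSubgroup.relIndex_dvd_index_of_normal A L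

lemma aux_ratio {mu sigma : ℕ} (hd : mu ∣ sigma) (hs : sigma ≠ 0) :
    ∃ p : ℕ, 0 < p ∧ (mu : ℝ) / (sigma : ℝ) = 1 / (p : ℝ) := by
  obtain ⟨p, rfl⟩ := hd
  have hp : p ≠ 0 := by rintro rfl; simp at hs
  refine ⟨p, Nat.pos_of_ne_zero hp, ?_⟩
  have h1 : (0:ℝ) < (mu : ℝ) * (p : ℝ) := by
    have h2 : 0 < mu * p := Nat.pos_of_ne_zero hs
    exact_mod_cast h2
  have h3 : (0:ℝ) < (p : ℝ) := by exact_mod_cast Nat.pos_of_ne_zero hp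
  rw [Nat.cast_mul, div_eq_div_iff h1.ne' h3.ne']
  ring

end AuxFacet

/-- For linearly independent `w₁, …, w_{n+1} ∈ ℤ^{n+1}`, the multiplicity of the facet
spanned by the first `n` of them, i.e. the index
`[ℤ^{n+1} ∩ span_ℝ {w₁, …, wₙ} : ℤw₁ + ⋯ + ℤwₙ]`, divides the multiplicity
`[ℤ^{n+1} : ℤw₁ + ⋯ + ℤw_{n+1}]` of the cone.  Consequently, for a toric Fano datum the
ratios `mult(μ_{1,2})/mult(σ₁)` and `mult(μ_{1,2})/mult(σ₂)` are reciprocals of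
positive integers. -/
theorem facet_mult_dvd_cone_mult (n : ℕ) :
    (∀ w : Fin (n + 1) → Fin (n + 1) → ℤ, LinearIndependent ℤ w →
      (AddSubgroup.closure (Set.range fun i : Fin n => w i.castSucc)).relIndex
        (AddSubgroup.comap (castHom (n + 1))
          (Submodule.span ℝ
            (Set.range fun i : Fin n => castVec (w i.castSucc))).toAddSubgroup) ∣
      (AddSubgroup.closure (Set.range w)).index) ∧
    (∀ m : ℕ, 1 ≤ m → ∀ D : ToricFanoDatum m,
      (∃ p : ℕ, 0 < p ∧ (D.multMu 0 1 : ℝ) / (D.multSigma 0 : ℝ) = 1 / (p : ℝ)) ∧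
      (∃ q : ℕ, 0 < q ∧ (D.multMu 0 1 : ℝ) / (D.multSigma 1 : ℝ) = 1 / (q : ℝ))) := by
  constructor
  · intro w hw
    exact (aux_core w hw).1
  · intro m hm D
    obtain ⟨N, rfl⟩ : ∃ N, m = N + 1 := ⟨m - 1, by omega⟩
    have hex : ∀ i : Fin (N + 1 + 1), (∃ j : Fin N, i = j.succ.succ) ↔ 2 ≤ i.val := by
      intro i
      constructor
      · rintro ⟨j, rfl⟩; simp only [Fin.val_succ]; omega
      · intro h
        have hi := i.isLt
        refine ⟨⟨i.val - 2, by omega⟩, Fin.ext ?_⟩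
        simp only [Fin.val_succ]
        omega
    have hfact : ∀ i : Fin (N + 1 + 1), (i ≠ 0 ∧ i ≠ 1) ↔ ∃ j : Fin N, i = j.succ.succ := by
      intro i
      have hi := i.isLt
      simp only [hex]
      simp only [Ne, Fin.ext_iff, Fin.val_zero, Fin.val_one]
      omega
    set u : Fin N → Fin (N + 1) → ℤ := fun i => D.v i.succ.succ with hu
    have hBset : {x : Fin (N + 1) → ℤ | ∃ i, i ≠ 0 ∧ i ≠ 1 ∧ x = D.v i} = Set.range u := by
      ext x
      constructor
      · rintro ⟨i, h0, h1, rfl⟩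
        obtain ⟨j, rfl⟩ := (hfact i).1 ⟨h0, h1⟩
        exact ⟨j, rfl⟩
      · rintro ⟨j, rfl⟩
        obtain ⟨h0, h1⟩ := (hfact j.succ.succ).2 ⟨j, rfl⟩
        exact ⟨j.succ.succ, h0, h1, rfl⟩
    have hLset : {x : Fin (N + 1) → ℝ | ∃ i, i ≠ 0 ∧ i ≠ 1 ∧ x = castVec (D.v i)}
        = Set.range (fun i => castVec (u i)) := by
      ext x
      constructor
      · rintro ⟨i, h0, h1, rfl⟩
        obtain ⟨j, rfl⟩ := (hfact i).1 ⟨h0, h1⟩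
        exact ⟨j, rfl⟩
      · rintro ⟨j, rfl⟩
        obtain ⟨h0, h1⟩ := (hfact j.succ.succ).2 ⟨j, rfl⟩
        exact ⟨j.succ.succ, h0, h1, rfl⟩
    have hsum : ∑ i, (D.a i : ℝ) • castVec (D.v i) = 0 := by
      have h2 := congrArg (castHom (N + 1)) D.sum_av
      rw [map_sum, map_zero] at h2
      have h3 : ∀ i : Fin (N + 1 + 1),
          (castHom (N + 1)) ((D.a i : ℤ) • D.v i) = (D.a i : ℝ) • castVec (D.v i) := by
        intro i
        rw [map_zsmul, ← Int.cast_smul_eq_zsmul ℝ]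
        norm_cast
      rw [Finset.sum_congr rfl (fun i _ => h3 i)] at h2
      exact h2
    have main : ∀ t o : Fin (N + 1 + 1),
        (∀ i : Fin (N + 1 + 1), i ≠ t ↔ (i = o ∨ ∃ j : Fin N, i = j.succ.succ)) →
        D.multMu 0 1 ∣ D.multSigma t ∧ D.multSigma t ≠ 0 := by
      intro t o hchar
      set w : Fin (N + 1) → Fin (N + 1) → ℤ :=
        fun j => Fin.lastCases (D.v o) u j with hwdef
      have hw_cast : ∀ i : Fin N, w i.castSucc = u i := fun i => by
        simp [hwdef]
      have hw_last : w (Fin.last N) = D.v o := by simp [hwdef]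
      have hcs : (fun i : Fin N => w i.castSucc) = u := funext hw_cast
      have hcs2 : (fun i : Fin N => castVec (w i.castSucc)) = fun i => castVec (u i) :=
        funext fun i => by rw [hw_cast]
      have hrange : Set.range w = {x : Fin (N + 1) → ℤ | ∃ i, i ≠ t ∧ x = D.v i} := by
        ext x
        constructor
        · rintro ⟨j, rfl⟩
          cases j using Fin.lastCases with
          | last => exact ⟨o, (hchar o).2 (Or.inl rfl), hw_last⟩
          | cast i => exact ⟨i.succ.succ, (hchar _).2 (Or.inr ⟨i, rfl⟩), hw_cast i⟩
        · rintro ⟨i, hit, rfl⟩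
          rcases (hchar i).1 hit with rfl | ⟨j, rfl⟩
          · exact ⟨Fin.last N, hw_last⟩
          · exact ⟨j.castSucc, hw_cast j⟩
      have hvmem : ∀ i : Fin (N + 1 + 1), i ≠ t →
          castVec (D.v i) ∈ Submodule.span ℝ (Set.range fun j => castVec (w j)) := by
        intro i hit
        have hmem : D.v i ∈ Set.range w := hrange ▸ ⟨i, hit, rfl⟩
        obtain ⟨j, hj⟩ := hmem
        exact Submodule.subset_span ⟨j, show castVec (w j) = _ by rw [hj]⟩
      have hat : (D.a t : ℝ) ≠ 0 := Nat.cast_ne_zero.mpr (D.a_pos t).ne'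
      have hvt : castVec (D.v t) ∈ Submodule.span ℝ (Set.range fun j => castVec (w j)) := by
        have h7 := Finset.add_sum_erase Finset.univ
          (fun i => (D.a i : ℝ) • castVec (D.v i)) (Finset.mem_univ t)
        rw [hsum] at h7
        have h6 : (D.a t : ℝ) • castVec (D.v t)
            = -∑ i ∈ Finset.univ.erase t, (D.a i : ℝ) • castVec (D.v i) :=
          eq_neg_of_add_eq_zero_left h7
        have h9 : (D.a t : ℝ) • castVec (D.v t)
            ∈ Submodule.span ℝ (Set.range fun j => castVec (w j)) := by
          rw [h6]
          exact neg_mem (Submodule.sum_mem _ fun i hi =>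
            Submodule.smul_mem _ _ (hvmem i (Finset.ne_of_mem_erase hi)))
        have h10 := Submodule.smul_mem _ (D.a t : ℝ)⁻¹ h9
        rwa [inv_smul_smul₀ hat] at h10
      have hS_top : ⊤ ≤ Submodule.span ℝ (Set.range fun j => castVec (w j)) := by
        intro x _
        obtain ⟨c, -, hx⟩ := D.span_cone x
        rw [hx]
        refine Submodule.sum_mem _ fun i _ => Submodule.smul_mem _ _ ?_
        by_cases hit : i = t
        · exact hit ▸ hvt
        · exact hvmem i hit
      have hLI : LinearIndependent ℤ w :=
        aux_li_int (linearIndependent_of_top_le_span_of_card_eq_finrank hS_top (by simp))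
      obtain ⟨hdvd, hne⟩ := aux_core w hLI
      rw [hcs, hcs2] at hdvd
      have hσeq : D.multSigma t = (AddSubgroup.closure (Set.range w)).index := by
        unfold ToricFanoDatum.multSigma
        rw [hrange]
      have hμeq : D.multMu 0 1 = (AddSubgroup.closure (Set.range u)).relIndex
          (AddSubgroup.comap (castHom (N + 1))
            (Submodule.span ℝ (Set.range fun i => castVec (u i))).toAddSubgroup) := by
        unfold ToricFanoDatum.multMu ToricFanoDatum.latticeMu
        rw [hBset, hLset]
      rw [hσeq, hμeq]
      exact ⟨hdvd, hne⟩
    have hchar0 : ∀ i : Fin (N + 1 + 1), i ≠ 0 ↔ (i = 1 ∨ ∃ j : Fin N, i = j.succ.succ) := by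
      intro i
      have hi := i.isLt
      simp only [hex]
      simp only [Ne, Fin.ext_iff, Fin.val_zero, Fin.val_one]
      omega
    have hchar1 : ∀ i : Fin (N + 1 + 1), i ≠ 1 ↔ (i = 0 ∨ ∃ j : Fin N, i = j.succ.succ) := by
      intro i
      have hi := i.isLt
      simp only [hex]
      simp only [Ne, Fin.ext_iff, Fin.val_zero, Fin.val_one]
      omega
    obtain ⟨hdvd0, hne0⟩ := main 0 1 hchar0
    obtain ⟨hdvd1, hne1⟩ := main 1 0 hchar1
    exact ⟨aux_ratio hdvd0 hne0, aux_ratio hdvd1 hne1⟩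

end
end
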